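/- arXiv:0911.4277 — 6 statements merged into one kernel-verified Lean document; each statement's English description precedes it below -/
import Mathlib

section
/- Let w, k, and b be positive integers with k ≤ w. If B is a block of length k in base b+1, then N(B, P_{b,w}) ≥ (w − k + 1)·(2^b − b)^{g_b(B)}·2^{b(w−k)}. -/
/-- The one-digit weighting `ν_b^{(1)}`: `1/2^b` for `j < b`, `(2^b - b)/2^b` for `j = b`,
and `0` for `j > b`. -/
noncomputable def nu1 (b j : ℕ) : ℝ :=
  if j < b then 1 / 2 ^ b else if j = b then (2 ^ b - b) / 2 ^ b else 0

/-- The weighting `ν_b` of a block `B = (b_1, …, b_k)`: `∏_j ν_b^{(1)}(b_j)`. -/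
noncomputable def nu (b : ℕ) (B : List ℕ) : ℝ := (B.map (nu1 b)).prod

/-- The `i`-th (0-indexed) block of length `w` in base `b`, in lexicographic order. -/
def lexBlock (b w i : ℕ) : List ℕ :=
  (List.range w).map (fun j => i / b ^ (w - 1 - j) % b)

/-- The block `P_{b,w}`: running over the blocks `P` of length `w` in base `b+1` in
lexicographic order, concatenate `2^{bw}·ν_b(P) = (2^b - b)^{g_b(P)}` copies of each `P`. -/
def Pblock (b w : ℕ) : List ℕ :=
  ((List.range ((b + 1) ^ w)).map fun i =>
    (List.replicate ((2 ^ b - b) ^ ((lexBlock (b + 1) w i).count b))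
      (lexBlock (b + 1) w i)).flatten).flatten

/-- `numOcc B y` is the number of occurrences of the block `B` as a contiguous
subblock of the block `y`. -/
def numOcc (B y : List ℕ) : ℕ :=
  ((List.range (y.length + 1)).filter (fun i => B.isPrefixOf (y.drop i))).length

/-! Occurrences of `B` in the pieces of a concatenation are occurrences in the whole, so
`N(B, P_{b,w}) ≥ ∑_P (2^b-b)^{g_b(P)} · #{j ≤ w-k : B occurs at position j of P}`.
Exchanging the sums, fix a position `j`: the weight `(2^b-b)^{g_b(P)}` is a product of
one-digit weights, so summing it over the `w-k` digits of `P` outside the window occupied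
by `B` gives `(2^b-b)^{g_b(B)} · (∑_{d ≤ b} (2^b-b)^{[d = b]})^{w-k}`, and the digit sum is
`b + (2^b - b) = 2^b`. -/

open Finset

lemma lexBlock_length (c m i : ℕ) : (lexBlock c m i).length = m := by
  simp [lexBlock]

lemma lexBlock_add_pow_mul {c m r : ℕ} (d : ℕ) (hr : r < c ^ m) (hd : d < c) :
    lexBlock c (m + 1) (r + c ^ m * d) = d :: lexBlock c m r := by
  have hlead : (r + c ^ m * d) / c ^ m = d := by
    rw [Nat.add_mul_div_left _ _ (pow_pos (by omega) m), Nat.div_eq_of_lt hr, zero_add]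
  rw [lexBlock, List.range_succ_eq_map, List.map_cons, List.map_map, Nat.add_sub_cancel,
    Nat.sub_zero, hlead, Nat.mod_eq_of_lt hd, lexBlock]
  congr 1
  refine List.map_congr_left fun j hj => ?_
  have hj : j < m := List.mem_range.mp hj
  -- the digits below position `m` do not see the multiple `c ^ m * d`
  obtain ⟨q, hq⟩ : c ^ (m - 1 - j) * c ∣ c ^ m * d :=
    ((pow_succ c (m - 1 - j)) ▸ pow_dvd_pow c (by omega : m - 1 - j + 1 ≤ m)).mul_right d
  simp only [Function.comp_apply, show m - (j + 1) = m - 1 - j by omega]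
  rw [← Nat.mod_mul_right_div_self, ← Nat.mod_mul_right_div_self, hq, Nat.add_mul_mod_self_left]

lemma sum_range_pow_succ_lexBlock {M : Type*} [AddCommMonoid M] (c m : ℕ) (F : List ℕ → M) :
    ∑ i ∈ range (c ^ (m + 1)), F (lexBlock c (m + 1) i) =
      ∑ d ∈ range c, ∑ r ∈ range (c ^ m), F (d :: lexBlock c m r) := by
  rw [pow_succ', sum_range, ← finProdFinEquiv.sum_comp, Fintype.sum_prod_type,
    sum_range]
  refine Fintype.sum_congr _ _ fun d => ?_
  rw [sum_range]
  refine Fintype.sum_congr _ _ fun r => ?_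
  simp [finProdFinEquiv, lexBlock_add_pow_mul _ r.2 d.2]

section WeightedBlockSums

variable {R : Type*} [CommSemiring R] (g : ℕ → R) {c : ℕ}

lemma sum_prod_map_lexBlock (m : ℕ) :
    ∑ i ∈ range (c ^ m), ((lexBlock c m i).map g).prod = (∑ d ∈ range c, g d) ^ m := by
  induction m with
  | zero => simp [lexBlock]
  | succ m ih =>
    rw [sum_range_pow_succ_lexBlock c m fun L => (L.map g).prod]
    simp only [List.map_cons, List.prod_cons, ← mul_sum, ih, ← sum_mul, pow_succ']

lemma sum_prod_map_lexBlock_mul_prefix (B : List ℕ) (hB : ∀ d ∈ B, d < c) {m : ℕ}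
    (hm : B.length ≤ m) :
    ∑ i ∈ range (c ^ m),
        ((lexBlock c m i).map g).prod * (if B <+: lexBlock c m i then 1 else 0) =
      (B.map g).prod * (∑ d ∈ range c, g d) ^ (m - B.length) := by
  induction B generalizing m with
  | nil => simp [sum_prod_map_lexBlock]
  | cons b₀ B ih =>
    obtain ⟨m, rfl⟩ : ∃ m', m = m' + 1 := ⟨m - 1, by simp at hm; omega⟩
    have hb₀ : b₀ ∈ range c := mem_range.mpr (hB b₀ List.mem_cons_self)
    have ih' := ih (fun d hd => hB d (List.mem_cons_of_mem _ hd)) (m := m) (by simpa using hm)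
    rw [sum_range_pow_succ_lexBlock c m
      fun L => (L.map g).prod * (if b₀ :: B <+: L then 1 else 0)]
    have hfactor : ∀ d L, ((d :: L).map g).prod * (if b₀ :: B <+: d :: L then 1 else 0) =
        (if b₀ = d then g d else 0) * ((L.map g).prod * if B <+: L then 1 else 0) := by
      intro d L
      by_cases h : b₀ = d <;> simp [List.cons_prefix_cons, h]
    simp only [hfactor]
    simp only [← mul_sum, ih', ← sum_mul, sum_ite_eq, if_pos hb₀, List.map_cons,
      List.prod_cons, List.length_cons, Nat.add_sub_add_right, mul_assoc]

lemma sum_prod_map_lexBlock_mul_prefix_drop (B : List ℕ) (hB : ∀ d ∈ B, d < c) {m j : ℕ}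
    (hjm : j + B.length ≤ m) :
    ∑ i ∈ range (c ^ m),
        ((lexBlock c m i).map g).prod * (if B <+: (lexBlock c m i).drop j then 1 else 0) =
      (B.map g).prod * (∑ d ∈ range c, g d) ^ (m - B.length) := by
  induction j generalizing m with
  | zero => simpa using sum_prod_map_lexBlock_mul_prefix g B hB (by omega)
  | succ j ih =>
    obtain ⟨m, rfl⟩ : ∃ m', m = m' + 1 := ⟨m - 1, by omega⟩
    rw [sum_range_pow_succ_lexBlock c m
      fun L => (L.map g).prod * (if B <+: L.drop (j + 1) then 1 else 0)]
    simp only [List.map_cons, List.prod_cons, List.drop_succ_cons,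
      mul_assoc, ← mul_sum, ih (m := m) (by omega), ← sum_mul]
    rw [show m + 1 - B.length = m - B.length + 1 by omega, pow_succ']
    ring

end WeightedBlockSums

lemma prod_map_ite_eq_pow_count {M : Type*} [CommMonoid M] (x : ℕ) (a : M) (L : List ℕ) :
    (L.map fun d => if d = x then a else 1).prod = a ^ L.count x := by
  induction L with
  | nil => simp
  | cons d L ih => by_cases h : d = x <;> simp [h, ih, pow_succ']

lemma sum_range_succ_ite_eq_last (b a : ℕ) :
    ∑ d ∈ range (b + 1), (if d = b then a else 1) = b + a := by
  rw [sum_range_succ, if_pos rfl, sum_congr rfl fun d hd => if_neg (mem_range.mp hd).ne]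
  simp

lemma sum_pow_count_lexBlock_mul_prefix_drop (a b : ℕ) (B : List ℕ)
    (hB : ∀ d ∈ B, d < b + 1) {m j : ℕ} (hjm : j + B.length ≤ m) :
    ∑ i ∈ range ((b + 1) ^ m),
        a ^ (lexBlock (b + 1) m i).count b *
          (if B <+: (lexBlock (b + 1) m i).drop j then 1 else 0) =
      a ^ B.count b * (b + a) ^ (m - B.length) := by
  simpa [prod_map_ite_eq_pow_count, sum_range_succ_ite_eq_last] using
    sum_prod_map_lexBlock_mul_prefix_drop (fun d => if d = b then a else 1) B hB hjm

section NumOcc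

variable {B : List ℕ}

lemma numOcc_eq_card (B y : List ℕ) :
    numOcc B y = #{i ∈ range (y.length + 1) | B <+: y.drop i} := by
  rw [numOcc, card_def, filter_val, range_val, Multiset.range, Multiset.filter_coe,
    Multiset.coe_card]
  congr 2
  funext i
  exact Bool.eq_iff_iff.mpr (by simp)

lemma numOcc_cons (B L : List ℕ) (x : ℕ) :
    numOcc B (x :: L) = numOcc B L + if B <+: x :: L then 1 else 0 := by
  rw [numOcc, List.length_cons, List.range_succ_eq_map, List.filter_cons, List.filter_map]
  by_cases h : B <+: x :: L <;> simp [h, numOcc, Function.comp_def]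

lemma numOcc_nil (hB : B ≠ []) : numOcc B [] = 0 := by
  simp [numOcc_eq_card, List.prefix_nil, hB]

lemma numOcc_add_numOcc_le_append (hB : B ≠ []) (x y : List ℕ) :
    numOcc B x + numOcc B y ≤ numOcc B (x ++ y) := by
  induction x with
  | nil => simp [numOcc_nil hB]
  | cons a x ih =>
    have hmono : B <+: a :: x → B <+: a :: (x ++ y) := fun h => h.trans ⟨y, rfl⟩
    rw [List.cons_append, numOcc_cons, numOcc_cons]
    split_ifs <;> grind

lemma sum_numOcc_le_numOcc_flatten (hB : B ≠ []) (l : List (List ℕ)) :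
    (l.map (numOcc B)).sum ≤ numOcc B l.flatten := by
  induction l with
  | nil => simp [numOcc_nil hB]
  | cons x l ih =>
    rw [List.map_cons, List.sum_cons, List.flatten_cons]
    exact (Nat.add_le_add_left ih _).trans (numOcc_add_numOcc_le_append hB _ _)

lemma mul_numOcc_le_numOcc_flatten_replicate (hB : B ≠ []) (n : ℕ) (P : List ℕ) :
    n * numOcc B P ≤ numOcc B (List.replicate n P).flatten := by
  simpa using sum_numOcc_le_numOcc_flatten hB (List.replicate n P)

lemma card_prefix_drop_le_numOcc (B P : List ℕ) {n : ℕ} (hn : n ≤ P.length) :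
    #{j ∈ range (n + 1) | B <+: P.drop j} ≤ numOcc B P := by
  rw [numOcc_eq_card]
  exact card_le_card (filter_subset_filter _ (range_subset_range.mpr (by omega)))

lemma sum_mul_numOcc_le_numOcc_Pblock (b w : ℕ) (hB : B ≠ []) :
    ∑ i ∈ range ((b + 1) ^ w),
        (2 ^ b - b) ^ (lexBlock (b + 1) w i).count b * numOcc B (lexBlock (b + 1) w i) ≤
      numOcc B (Pblock b w) := by
  set P := lexBlock (b + 1) w
  calc _ ≤ ∑ i ∈ range ((b + 1) ^ w),
          numOcc B (List.replicate ((2 ^ b - b) ^ (P i).count b) (P i)).flatten :=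
        sum_le_sum fun i _ => mul_numOcc_le_numOcc_flatten_replicate hB _ _
    _ ≤ numOcc B (Pblock b w) := by
        have h := sum_numOcc_le_numOcc_flatten hB ((List.range ((b + 1) ^ w)).map fun i =>
          (List.replicate ((2 ^ b - b) ^ (P i).count b) (P i)).flatten)
        rwa [List.map_map] at h

end NumOcc

theorem stmt2_general (w k b : ℕ) (hk : 0 < k) (hkw : k ≤ w)
    (B : List ℕ) (hlen : B.length = k) (hbase : ∀ d ∈ B, d < b + 1) :
    (w - k + 1) * (2 ^ b - b) ^ B.count b * 2 ^ (b * (w - k)) ≤ numOcc B (Pblock b w) := by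
  subst hlen
  set P := lexBlock (b + 1) w
  have hdigits : b + (2 ^ b - b) = 2 ^ b := Nat.add_sub_cancel' Nat.lt_two_pow_self.le
  calc (w - B.length + 1) * (2 ^ b - b) ^ B.count b * 2 ^ (b * (w - B.length))
      = ∑ j ∈ range (w - B.length + 1), ∑ i ∈ range ((b + 1) ^ w),
          (2 ^ b - b) ^ (P i).count b * (if B <+: (P i).drop j then 1 else 0) := by
        rw [sum_congr rfl fun j hj => sum_pow_count_lexBlock_mul_prefix_drop _ b B hbase
          (by have := mem_range.mp hj; omega), sum_const, card_range, smul_eq_mul, hdigits,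
          ← pow_mul, mul_assoc]
    _ = ∑ i ∈ range ((b + 1) ^ w),
          (2 ^ b - b) ^ (P i).count b * #{j ∈ range (w - B.length + 1) | B <+: (P i).drop j} := by
        rw [sum_comm]
        simp_rw [card_filter, mul_sum]
    _ ≤ ∑ i ∈ range ((b + 1) ^ w), (2 ^ b - b) ^ (P i).count b * numOcc B (P i) :=
        sum_le_sum fun i _ => Nat.mul_le_mul_left _
          (card_prefix_drop_le_numOcc B (P i) (by rw [lexBlock_length]; omega))
    _ ≤ numOcc B (Pblock b w) :=
        sum_mul_numOcc_le_numOcc_Pblock b w (List.ne_nil_of_length_pos hk)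

/-- If `w, k, b` are positive integers with `k ≤ w` and `B` is a block of length `k`
in base `b+1`, then `N(B, P_{b,w}) ≥ (w-k+1)·(2^b - b)^{g_b(B)}·2^{b(w-k)}`. -/
theorem stmt2 (w k b : ℕ) (hw : 0 < w) (hk : 0 < k) (hb : 0 < b) (hkw : k ≤ w)
    (B : List ℕ) (hlen : B.length = k) (hbase : ∀ d ∈ B, d < b + 1) :
    (w - k + 1) * (2 ^ b - b) ^ B.count b * 2 ^ (b * (w - k)) ≤ numOcc B (Pblock b w) :=
  stmt2_general w k b hk hkw B hlen hbase
end

section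
/- If m, b, k and w are positive integers such that b ≥ 6 and m ≤ k ≤ w/2, then (m−1)·(b+1)^w ≤ k·2^{b(w−m)}. -/
lemma sq_le_two_pow : ∀ b : ℕ, 6 ≤ b → (b + 1) ^ 2 ≤ 2 ^ b := by
  intro b hb
  induction b with
  | zero => omega
  | succ n ih =>
    rcases Nat.lt_or_ge n 6 with h | h
    · interval_cases n <;> first | omega | norm_num
    · have := ih (by omega)
      have : (n + 2) ^ 2 ≤ 2 * (n + 1) ^ 2 := by nlinarith
      calc (n + 1 + 1) ^ 2 ≤ 2 * (n + 1) ^ 2 := this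
        _ ≤ 2 * 2 ^ n := by have := ih (by omega); omega
        _ = 2 ^ (n + 1) := by ring

/-- If `m, b, k, w` are positive integers with `b ≥ 6`, `m ≤ k` and `2k ≤ w`, then
`(m-1)·(b+1)^w ≤ k·2^(b(w-m))`. -/
theorem stmt4 (m b k w : ℕ) (hm : 0 < m) (hb : 6 ≤ b) (hk : 0 < k) (hw : 0 < w)
    (hmk : m ≤ k) (hkw : 2 * k ≤ w) :
    (m - 1) * (b + 1) ^ w ≤ k * 2 ^ (b * (w - m)) := by
  have hwm : w ≤ 2 * (w - m) := by omega
  have h1 : (b + 1) ^ w ≤ 2 ^ (b * (w - m)) := by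
    calc (b + 1) ^ w ≤ (b + 1) ^ (2 * (w - m)) :=
          Nat.pow_le_pow_right (by omega) hwm
      _ = ((b + 1) ^ 2) ^ (w - m) := by rw [← pow_mul]
      _ ≤ (2 ^ b) ^ (w - m) := Nat.pow_le_pow_left (sq_le_two_pow b hb) _
      _ = 2 ^ (b * (w - m)) := by rw [← pow_mul]
  exact Nat.mul_le_mul (by omega) h1
end

section
/- Define blocks x_i and integers b_i, l_i by: for i ≤ 5, x_i = (0,1), b_i = 2, l_i = 0; for i ≥ 6, x_i = P_{i,i²}, b_i = 2^i, l_i = 2^{4i²}. Let (E_1,E_2,...) be the concatenation l_1x_1 l_2x_2 l_3x_3 ..., let L_i = Σ_{j=1}^i l_j|x_j|, let q_n = b_i for L_{i−1} < n ≤ L_i, let Q = {q_n}, and let x = Σ_{n=1}^∞ E_n/(q_1···q_n). Then lim_{n→∞} T_{Q,n}(x) = 0, where T_{Q,n}(x) = q_1···q_n·x (mod 1). -/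
/-- The blocks of the construction: `x_i = (0,1)` for `i ≤ 5` and `x_i = P_{i,i²}` for `i ≥ 6`. -/
def xSeq (i : ℕ) : List ℕ := if i ≤ 5 then [0, 1] else Pblock i (i ^ 2)

/-- The bases of the construction: `b_i = 2` for `i ≤ 5` and `b_i = 2^i` for `i ≥ 6`. -/
def bSeq (i : ℕ) : ℕ := if i ≤ 5 then 2 else 2 ^ i

/-- The repetition counts: `l_i = 0` for `i ≤ 5` and `l_i = 2^{4i²}` for `i ≥ 6`. -/
def lSeq (i : ℕ) : ℕ := if i ≤ 5 then 0 else 2 ^ (4 * i ^ 2)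

/-- `L_i = Σ_{j=1}^i l_j·|x_j|`. -/
def Lsum (i : ℕ) : ℕ := ∑ j ∈ Finset.Icc 1 i, lSeq j * (xSeq j).length

/-- The concatenation `l_1x_1 l_2x_2 … l_ix_i` (a block of length `L_i`). -/
def prefixUpTo (i : ℕ) : List ℕ :=
  ((List.range i).map fun j => (List.replicate (lSeq (j + 1)) (xSeq (j + 1))).flatten).flatten

/-- For `n ≥ 1`, the unique index `i` with `L_{i-1} < n ≤ L_i`. -/
noncomputable def iOf (n : ℕ) : ℕ := sInf {i | n ≤ Lsum i}

/-- The digit sequence `(E_1, E_2, …) = l_1x_1 l_2x_2 …` (1-indexed): `E n` is the `n`-th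
entry of the infinite concatenation. -/
noncomputable def Edig (n : ℕ) : ℕ := (prefixUpTo (iOf n)).getD (n - 1) 0

/-- The basic sequence `Q` (1-indexed): `q_n = b_i` for `L_{i-1} < n ≤ L_i`. -/
noncomputable def qSeq (n : ℕ) : ℕ := bSeq (iOf n)

/-- The real number `x = Σ_{n=1}^∞ E_n / (q_1 ⋯ q_n)`. -/
noncomputable def xVal : ℝ :=
  ∑' n : ℕ, (Edig (n + 1) : ℝ) / ∏ m ∈ Finset.range (n + 1), (qSeq (m + 1) : ℝ)

/-- `T_{Q,n}(x) = q_1 ⋯ q_n · x (mod 1)`. -/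
noncomputable def TQ (q : ℕ → ℕ) (x : ℝ) (n : ℕ) : ℝ :=
  Int.fract ((∏ m ∈ Finset.range n, (q (m + 1) : ℝ)) * x)


/-! On the `i`-th stretch of the construction the digits are at most `i` while `q_n = 2^i`, so
`E_n / q_n ≤ i / 2^i → 0`. For any Cantor series with `q_n ≥ 2` this forces `T_{Q,n}(x) → 0`:
multiplying `x` by `q_1 ⋯ q_n` turns the first `n` terms into integers, and once `E_k ≤ ε q_k` for
all `k > n`, the `t`-th remaining term is at most `ε / 2^t`, so the tail is at most `2ε`. -/

open Filter Finset Topology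

section CantorSeries

variable (q E : ℕ → ℕ)

noncomputable def basicProd (n : ℕ) : ℝ := ∏ m ∈ range n, (q (m + 1) : ℝ)

noncomputable def cantorTerm (m : ℕ) : ℝ := E (m + 1) / basicProd q (m + 1)

variable {q E}

lemma basicProd_pos (hq : ∀ k, 0 < q (k + 1)) (n : ℕ) : 0 < basicProd q n :=
  prod_pos fun k _ => Nat.cast_pos.2 (hq k)

lemma basicProd_mul_cantorTerm_of_lt (hq : ∀ k, 0 < q (k + 1)) {m n : ℕ} (hmn : m < n) :
    basicProd q n * cantorTerm q E m = ((E (m + 1) * ∏ k ∈ Ico (m + 1) n, q (k + 1) : ℕ) : ℝ) := by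
  have hsplit : basicProd q n = basicProd q (m + 1) * ∏ k ∈ Ico (m + 1) n, (q (k + 1) : ℝ) :=
    (prod_range_mul_prod_Ico _ hmn).symm
  have hpos := basicProd_pos hq (m + 1)
  rw [hsplit, cantorTerm]
  push_cast
  field_simp

lemma fract_basicProd_mul_tsum (hq : ∀ k, 0 < q (k + 1)) (hs : Summable (cantorTerm q E))
    (n : ℕ) :
    Int.fract (basicProd q n * ∑' m, cantorTerm q E m) =
      Int.fract (∑' t, basicProd q n * cantorTerm q E (t + n)) := by
  rw [← hs.sum_add_tsum_nat_add n, mul_add, mul_sum, tsum_mul_left,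
    sum_congr rfl fun m hm => basicProd_mul_cantorTerm_of_lt hq (mem_range.1 hm),
    ← Nat.cast_sum, Int.fract_natCast_add]

lemma basicProd_mul_cantorTerm_le (hq : ∀ k, 2 ≤ q (k + 1)) {n : ℕ} {ε : ℝ}
    (hE : ∀ k ≥ n, (E (k + 1) : ℝ) ≤ ε * q (k + 1)) (t : ℕ) :
    basicProd q n * cantorTerm q E (t + n) ≤ ε * (1 / 2) ^ t := by
  have hq2 : ∀ k, (2 : ℝ) ≤ q (k + 1) := fun k => by exact_mod_cast hq k
  set P := ∏ k ∈ range t, (q (n + k + 1) : ℝ)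
  have hP : (2 : ℝ) ^ t ≤ P := by
    simpa using prod_le_prod (s := range t) (fun _ _ => zero_le_two) fun k _ => hq2 (n + k)
  have hsplit : basicProd q (t + n + 1) = basicProd q n * (P * q (t + n + 1)) := by
    rw [basicProd, show t + n + 1 = n + (t + 1) by omega, prod_range_add, prod_range_succ]
    rfl
  have hlast : (E (t + n + 1) : ℝ) ≤ ε * q (t + n + 1) := hE (t + n) (by omega)
  have hε : 0 ≤ ε :=
    nonneg_of_mul_nonneg_left ((Nat.cast_nonneg _).trans hlast) (by linarith [hq2 (t + n)])
  have hQn := basicProd_pos (fun k => by have := hq k; omega : ∀ k, 0 < q (k + 1)) n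
  rw [cantorTerm, hsplit, mul_div_assoc', mul_div_mul_left _ _ hQn.ne',
    div_le_iff₀ (mul_pos ((pow_pos two_pos t).trans_le hP) (by linarith [hq2 (t + n)]))]
  calc (E (t + n + 1) : ℝ) ≤ ε * q (t + n + 1) := hlast
    _ = ε * (1 / 2) ^ t * 2 ^ t * q (t + n + 1) := by rw [mul_assoc ε, ← mul_pow]; norm_num
    _ ≤ ε * (1 / 2) ^ t * (P * q (t + n + 1)) := by
        rw [mul_assoc _ ((2 : ℝ) ^ t)]
        gcongr

lemma basicProd_mul_cantorTerm_nonneg (n m : ℕ) : 0 ≤ basicProd q n * cantorTerm q E m :=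
  mul_nonneg (prod_nonneg fun _ _ => Nat.cast_nonneg _)
    (div_nonneg (Nat.cast_nonneg _) (prod_nonneg fun _ _ => Nat.cast_nonneg _))

lemma summable_basicProd_mul_cantorTerm (hq : ∀ k, 2 ≤ q (k + 1)) {n : ℕ} {ε : ℝ}
    (hE : ∀ k ≥ n, (E (k + 1) : ℝ) ≤ ε * q (k + 1)) :
    Summable fun t => basicProd q n * cantorTerm q E (t + n) :=
  (summable_geometric_two.mul_left ε).of_nonneg_of_le
    (fun _ => basicProd_mul_cantorTerm_nonneg _ _)
    (basicProd_mul_cantorTerm_le hq hE)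

lemma tsum_basicProd_mul_cantorTerm_le (hq : ∀ k, 2 ≤ q (k + 1)) {n : ℕ} {ε : ℝ}
    (hE : ∀ k ≥ n, (E (k + 1) : ℝ) ≤ ε * q (k + 1)) :
    ∑' t, basicProd q n * cantorTerm q E (t + n) ≤ 2 * ε := by
  calc ∑' t, basicProd q n * cantorTerm q E (t + n) ≤ ∑' t : ℕ, ε * (1 / 2) ^ t :=
        (summable_basicProd_mul_cantorTerm hq hE).tsum_le_tsum (basicProd_mul_cantorTerm_le hq hE)
          (summable_geometric_two.mul_left ε)
    _ = 2 * ε := by rw [tsum_mul_left, tsum_geometric_two, mul_comm]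

lemma summable_cantorTerm (hq : ∀ k, 2 ≤ q (k + 1)) {n : ℕ} {ε : ℝ}
    (hE : ∀ k ≥ n, (E (k + 1) : ℝ) ≤ ε * q (k + 1)) : Summable (cantorTerm q E) := by
  have hQn := basicProd_pos (fun k => by have := hq k; omega : ∀ k, 0 < q (k + 1)) n
  refine (summable_nat_add_iff n).1 ?_
  simpa [← mul_assoc, inv_mul_cancel₀ hQn.ne'] using
    (summable_basicProd_mul_cantorTerm hq hE).mul_left (basicProd q n)⁻¹

lemma eventually_forall_ge_le_mul_of_tendsto
    (hE : Tendsto (fun k => (E (k + 1) : ℝ) / q (k + 1)) atTop (𝓝 0)) (hq : ∀ k, 0 < q (k + 1))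
    {ε : ℝ} (hε : 0 < ε) : ∀ᶠ n in atTop, ∀ k ≥ n, (E (k + 1) : ℝ) ≤ ε * q (k + 1) := by
  obtain ⟨N, hN⟩ := eventually_atTop.1 (hE.eventually (ge_mem_nhds hε))
  refine eventually_atTop.2 ⟨N, fun n hn k hk => ?_⟩
  rw [← div_le_iff₀ (Nat.cast_pos.2 (hq k))]
  exact hN k (hn.trans hk)

theorem tendsto_TQ_cantorSeries (hq : ∀ k, 2 ≤ q (k + 1))
    (hE : Tendsto (fun k => (E (k + 1) : ℝ) / q (k + 1)) atTop (𝓝 0)) :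
    Tendsto (TQ q (∑' m, cantorTerm q E m)) atTop (𝓝 0) := by
  have hq0 : ∀ k, 0 < q (k + 1) := fun k => by have := hq k; omega
  obtain ⟨N, hN⟩ := (eventually_forall_ge_le_mul_of_tendsto hE hq0 one_pos).exists
  have hs := summable_cantorTerm hq hN
  refine tendsto_order.2 ⟨fun a ha => .of_forall fun n => ha.trans_le (Int.fract_nonneg _),
    fun a ha => ?_⟩
  filter_upwards [eventually_forall_ge_le_mul_of_tendsto hE hq0 (by positivity : 0 < a / 4)]
    with n hn
  have htail := tsum_basicProd_mul_cantorTerm_le hq hn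
  have htail0 : 0 ≤ ∑' t, basicProd q n * cantorTerm q E (t + n) :=
    tsum_nonneg fun _ => basicProd_mul_cantorTerm_nonneg _ _
  calc TQ q (∑' m, cantorTerm q E m) n
      = Int.fract (∑' t, basicProd q n * cantorTerm q E (t + n)) :=
        fract_basicProd_mul_tsum hq0 hs n
    _ ≤ ∑' t, basicProd q n * cantorTerm q E (t + n) := by
        rw [← Int.self_sub_floor]
        linarith [(Int.cast_nonneg (R := ℝ)) (Int.floor_nonneg.2 htail0)]
    _ < a := by linarith

end CantorSeries

section Construction

lemma zero_mem_Pblock (b : ℕ) {w : ℕ} (hw : 0 < w) : 0 ∈ Pblock b w := by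
  have hmult : 0 < 2 ^ b - b := Nat.sub_pos_of_lt b.lt_two_pow_self
  simp only [Pblock, List.mem_flatten, List.mem_map, List.mem_range, List.mem_replicate,
    exists_exists_and_eq_and]
  refine ⟨0, by positivity, _, ⟨pow_ne_zero _ hmult.ne', rfl⟩, ?_⟩
  simp only [lexBlock, List.mem_map, List.mem_range]
  exact ⟨0, hw, by simp⟩

lemma mem_Pblock_le {b w x : ℕ} (hx : x ∈ Pblock b w) : x ≤ b := by
  simp only [Pblock, lexBlock, List.mem_flatten, List.mem_map, List.mem_range,
    List.mem_replicate, exists_exists_and_eq_and] at hx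
  obtain ⟨i, -, _, ⟨-, rfl⟩, hx⟩ := hx
  obtain ⟨j, -, rfl⟩ := List.mem_map.1 hx
  exact Nat.lt_succ_iff.1 (Nat.mod_lt _ b.succ_pos)

lemma xSeq_ne_nil (i : ℕ) : xSeq i ≠ [] := by
  unfold xSeq
  split_ifs
  · simp
  · exact List.ne_nil_of_mem (zero_mem_Pblock i (pow_pos (by omega) 2))

lemma mem_xSeq_le {i x : ℕ} (hi : 1 ≤ i) (hx : x ∈ xSeq i) : x ≤ i := by
  unfold xSeq at hx
  split_ifs at hx
  · simp only [List.mem_cons, List.not_mem_nil, or_false] at hx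
    omega
  · exact mem_Pblock_le hx

lemma mem_prefixUpTo_le {i x : ℕ} (hx : x ∈ prefixUpTo i) : x ≤ i := by
  simp only [prefixUpTo, List.mem_flatten, List.mem_map, List.mem_range,
    List.mem_replicate, exists_exists_and_eq_and] at hx
  obtain ⟨j, hj, _, ⟨-, rfl⟩, hx⟩ := hx
  have := mem_xSeq_le j.succ_pos hx
  omega

lemma Edig_le_iOf (n : ℕ) : Edig n ≤ iOf n := by
  unfold Edig
  rcases lt_or_ge (n - 1) (prefixUpTo (iOf n)).length with h | h
  · rw [List.getD_eq_getElem _ _ h]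
    exact mem_prefixUpTo_le (List.getElem_mem h)
  · rw [List.getD_eq_default _ _ h]
    exact Nat.zero_le _

lemma Lsum_mono : Monotone Lsum := fun _ _ hab =>
  sum_le_sum_of_subset (Icc_subset_Icc_right hab)

lemma self_le_Lsum {i : ℕ} (hi : 6 ≤ i) : i ≤ Lsum i := by
  have hlen := List.length_pos_of_ne_nil (xSeq_ne_nil i)
  calc i ≤ 2 ^ (4 * i ^ 2) := (Nat.lt_two_pow_self.trans_le (Nat.pow_le_pow_right two_pos
          (by nlinarith))).le
    _ = lSeq i := by rw [lSeq, if_neg (by omega)]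
    _ ≤ lSeq i * (xSeq i).length := Nat.le_mul_of_pos_right _ hlen
    _ ≤ Lsum i := single_le_sum (f := fun j => lSeq j * (xSeq j).length)
          (fun _ _ => Nat.zero_le _) (mem_Icc.2 ⟨by omega, le_rfl⟩)

lemma le_Lsum_iOf (n : ℕ) : n ≤ Lsum (iOf n) :=
  Nat.sInf_mem (s := {i | n ≤ Lsum i})
    ⟨n + 6, (Nat.le_add_right n 6).trans (self_le_Lsum (by omega))⟩

lemma tendsto_iOf_atTop : Tendsto iOf atTop atTop := by
  refine tendsto_atTop_atTop.2 fun i => ⟨Lsum i + 1, fun n hn => ?_⟩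
  by_contra! h
  have := (le_Lsum_iOf n).trans (Lsum_mono h.le)
  omega

lemma two_le_qSeq (n : ℕ) : 2 ≤ qSeq n := by
  unfold qSeq bSeq
  split_ifs with h
  · exact le_rfl
  · exact Nat.le_self_pow (by omega) 2

lemma tendsto_Edig_div_qSeq :
    Tendsto (fun k => (Edig (k + 1) : ℝ) / qSeq (k + 1)) atTop (𝓝 0) := by
  have hi : Tendsto (fun k => iOf (k + 1)) atTop atTop :=
    tendsto_iOf_atTop.comp (tendsto_add_atTop_nat 1)
  have hratio := (by simpa using tendsto_pow_const_div_const_pow_of_one_lt 1 one_lt_two :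
    Tendsto (fun i : ℕ => (i : ℝ) / 2 ^ i) atTop (𝓝 0))
  refine squeeze_zero' (.of_forall fun _ => by positivity)
    ((hi.eventually_ge_atTop 6).mono fun k hk => ?_) (hratio.comp hi)
  rw [Function.comp_apply, qSeq, bSeq, if_neg (by omega), Nat.cast_pow, Nat.cast_two]
  gcongr
  exact_mod_cast Edig_le_iOf (k + 1)

end Construction

/-- For the construction `x_i = (0,1)`, `b_i = 2`, `l_i = 0` for `i ≤ 5` and
`x_i = P_{i,i²}`, `b_i = 2^i`, `l_i = 2^{4i²}` for `i ≥ 6`, one has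
`lim_{n→∞} T_{Q,n}(x) = 0`. -/
theorem stmt7 : Filter.Tendsto (fun n => TQ qSeq xVal n) Filter.atTop (nhds 0) :=
  tendsto_TQ_cantorSeries (fun k => two_le_qSeq (k + 1)) tendsto_Edig_div_qSeq
end

section
/- Define blocks x_i and integers b_i, l_i by: for i ≤ 5, x_i = (0,1), b_i = 2, l_i = 0; for i ≥ 6, x_i = P_{i,i²}, b_i = 2^i, l_i = 2^{4i²}. Let (E_1,E_2,...) be the concatenation l_1x_1 l_2x_2 l_3x_3 ..., let L_i = Σ_{j=1}^i l_j|x_j|, let q_n = b_i for L_{i−1} < n ≤ L_i, let Q = {q_n}, and let x = Σ_{n=1}^∞ E_n/(q_1···q_n). Then x is not Q-distribution normal. -/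
/-- A sequence `u` of real numbers is uniformly distributed mod 1. -/
def UDMod1 (u : ℕ → ℝ) : Prop :=
  ∀ a b : ℝ, 0 ≤ a → a < b → b ≤ 1 →
    Filter.Tendsto
      (fun N => (((Finset.range N).filter fun n =>
        a ≤ Int.fract (u n) ∧ Int.fract (u n) < b).card : ℝ) / N)
      Filter.atTop (nhds (b - a))


/-!
The digits of `x` are tiny compared with the bases: a digit in the `i`-th stage is at most `i`,
while the base there is `2^i ≥ 8i`. Hence every digit satisfies `E_n ≤ q_n / 8`, and
`T_{Q,n}(x)` is the tail `Σ_{k>n} E_k / (q_{n+1} ⋯ q_k) ≤ (1/8) Σ_{j ≥ 0} 2^{-j} = 1/4`.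
The orbit never enters `[1/2, 1)`, so it is not uniformly distributed.
-/

open Finset

lemma not_UDMod1_of_fract_le {u : ℕ → ℝ} {c : ℝ} (hu : ∀ n, Int.fract (u n) ≤ c) (hc : c < 1) :
    ¬ UDMod1 u := by
  intro hud
  have hc0 : 0 ≤ c := (Int.fract_nonneg (u 0)).trans (hu 0)
  have hlim := hud ((1 + c) / 2) 1 (by linarith) (by linarith) le_rfl
  have hcount : ∀ N, ((range N).filter fun n =>
      (1 + c) / 2 ≤ Int.fract (u n) ∧ Int.fract (u n) < 1) = ∅ := fun N =>
    filter_eq_empty_iff.mpr fun n _ h => by linarith [hu n, h.1]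
  simp only [hcount, card_empty, Nat.cast_zero, zero_div] at hlim
  linarith [tendsto_nhds_unique hlim tendsto_const_nhds]

section CantorSeries

noncomputable def cantorSeries (q E : ℕ → ℕ) : ℝ :=
  ∑' n : ℕ, (E (n + 1) : ℝ) / ∏ m ∈ range (n + 1), (q (m + 1) : ℝ)

variable {q E : ℕ → ℕ} {δ : ℝ}

lemma cantorSeries_term_le (hq : ∀ k, 2 ≤ q k) (hE : ∀ k, (E k : ℝ) ≤ δ * q k) (n : ℕ) :
    (E (n + 1) : ℝ) / ∏ m ∈ range (n + 1), (q (m + 1) : ℝ) ≤ δ * (1 / 2) ^ n := by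
  have hq_pos : ∀ k, (0 : ℝ) < q k := fun k => Nat.cast_pos.mpr (by have := hq k; omega)
  have hdigit : (E (n + 1) : ℝ) / q (n + 1) ≤ δ := (div_le_iff₀ (hq_pos _)).mpr (hE _)
  have hδ : 0 ≤ δ := (div_nonneg (Nat.cast_nonneg _) (hq_pos _).le).trans hdigit
  have hprod : (2 : ℝ) ^ n ≤ ∏ m ∈ range n, (q (m + 1) : ℝ) := by
    simpa using prod_le_prod (s := range n) (fun _ _ => zero_le_two)
      fun m _ => (by exact_mod_cast hq (m + 1) : (2 : ℝ) ≤ q (m + 1))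
  calc (E (n + 1) : ℝ) / ∏ m ∈ range (n + 1), (q (m + 1) : ℝ)
      = (E (n + 1) / q (n + 1) : ℝ) / ∏ m ∈ range n, (q (m + 1) : ℝ) := by
        rw [prod_range_succ, div_div, mul_comm]
    _ ≤ δ / 2 ^ n := div_le_div₀ hδ hdigit (by positivity) hprod
    _ = δ * (1 / 2) ^ n := by rw [one_div_pow, div_eq_mul_one_div]

lemma summable_cantorSeries (hq : ∀ k, 2 ≤ q k) (hE : ∀ k, (E k : ℝ) ≤ δ * q k) :
    Summable fun n => (E (n + 1) : ℝ) / ∏ m ∈ range (n + 1), (q (m + 1) : ℝ) :=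
  Summable.of_nonneg_of_le (fun _ => by positivity) (cantorSeries_term_le hq hE)
    ((summable_geometric_of_lt_one (by norm_num) (by norm_num)).mul_left δ)

lemma cantorSeries_nonneg : 0 ≤ cantorSeries q E :=
  tsum_nonneg fun _ => by positivity

lemma cantorSeries_le (hq : ∀ k, 2 ≤ q k) (hE : ∀ k, (E k : ℝ) ≤ δ * q k) :
    cantorSeries q E ≤ 2 * δ := by
  have hgeom := tsum_geometric_of_lt_one (r := (1 / 2 : ℝ)) (by norm_num) (by norm_num)
  calc cantorSeries q E ≤ ∑' n : ℕ, δ * (1 / 2) ^ n :=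
        (summable_cantorSeries hq hE).tsum_le_tsum (cantorSeries_term_le hq hE)
          ((summable_geometric_of_lt_one (by norm_num) (by norm_num)).mul_left δ)
    _ = 2 * δ := by rw [tsum_mul_left, hgeom]; norm_num; ring

lemma mul_cantorSeries (hq : ∀ k, 2 ≤ q k) (hE : ∀ k, (E k : ℝ) ≤ δ * q k) :
    (q 1 : ℝ) * cantorSeries q E =
      E 1 + cantorSeries (fun k => q (k + 1)) (fun k => E (k + 1)) := by
  have hq1 : (q 1 : ℝ) ≠ 0 := by exact_mod_cast (by have := hq 1; omega : q 1 ≠ 0)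
  rw [cantorSeries, (summable_cantorSeries hq hE).tsum_eq_zero_add, mul_add, ← tsum_mul_left,
    cantorSeries]
  congr 1
  · simp only [zero_add, range_one, prod_singleton]
    field_simp
  · refine tsum_congr fun n => ?_
    rw [prod_range_succ' _ (n + 1)]
    field_simp

lemma exists_prod_mul_cantorSeries (hq : ∀ k, 2 ≤ q k) (hE : ∀ k, (E k : ℝ) ≤ δ * q k)
    (n : ℕ) : ∃ A : ℕ, (∏ m ∈ range n, (q (m + 1) : ℝ)) * cantorSeries q E =
      A + cantorSeries (fun k => q (k + n)) (fun k => E (k + n)) := by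
  induction n generalizing q E with
  | zero => exact ⟨0, by simp⟩
  | succ n ih =>
    obtain ⟨A, hA⟩ := ih (q := fun k => q (k + 1)) (E := fun k => E (k + 1))
      (fun _ => hq _) (fun _ => hE _)
    refine ⟨(∏ m ∈ range n, q (m + 2)) * E 1 + A, ?_⟩
    rw [prod_range_succ', mul_assoc, mul_cantorSeries hq hE, mul_add, hA, Nat.cast_add,
      Nat.cast_mul, Nat.cast_prod]
    exact (add_assoc _ _ _).symm

lemma TQ_cantorSeries_le (hq : ∀ k, 2 ≤ q k) (hE : ∀ k, (E k : ℝ) ≤ δ * q k) (hδ : 2 * δ < 1)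
    (n : ℕ) : TQ q (cantorSeries q E) n ≤ 2 * δ := by
  obtain ⟨A, hA⟩ := exists_prod_mul_cantorSeries hq hE n
  have htail_le := cantorSeries_le (q := fun k => q (k + n)) (E := fun k => E (k + n))
    (fun _ => hq _) (fun _ => hE _)
  rw [TQ, hA, Int.fract_natCast_add,
    Int.fract_eq_self.mpr ⟨cantorSeries_nonneg, htail_le.trans_lt hδ⟩]
  exact htail_le

end CantorSeries

lemma le_of_mem_Pblock {b w a : ℕ} (ha : a ∈ Pblock b w) : a ≤ b := by
  simp only [Pblock, List.mem_flatten, List.mem_map, List.mem_range] at ha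
  obtain ⟨_, ⟨i, _, rfl⟩, ha⟩ := ha
  simp only [List.mem_flatten, List.mem_replicate] at ha
  obtain ⟨_, ⟨_, rfl⟩, ha⟩ := ha
  simp only [lexBlock, List.mem_map, List.mem_range] at ha
  obtain ⟨j, _, rfl⟩ := ha
  exact Nat.lt_succ_iff.mp (Nat.mod_lt _ (Nat.succ_pos b))

lemma eight_mul_le_two_pow {i : ℕ} (hi : 6 ≤ i) : 8 * i ≤ 2 ^ i := by
  induction i, hi using Nat.le_induction with
  | base => norm_num
  | succ n hn ih => rw [pow_succ]; omega

lemma two_le_bSeq (i : ℕ) : 2 ≤ bSeq i := by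
  unfold bSeq
  split_ifs with h
  · rfl
  · exact Nat.one_lt_two_pow (by omega)

-- Only stages with `i ≥ 6` occur (`l_i = 0` otherwise), and there the digits of `P_{i,i²}` are `≤ i`.
lemma eight_mul_le_bSeq_of_mem_prefixUpTo {i a : ℕ} (ha : a ∈ prefixUpTo i) :
    8 * a ≤ bSeq i := by
  simp only [prefixUpTo, List.mem_flatten, List.mem_map, List.mem_range] at ha
  obtain ⟨_, ⟨j, hj, rfl⟩, ha⟩ := ha
  simp only [List.mem_flatten, List.mem_replicate] at ha
  obtain ⟨_, ⟨hl, rfl⟩, hx⟩ := ha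
  have hj6 : ¬ j + 1 ≤ 5 := fun h => hl (by simp [lSeq, h])
  rw [xSeq, if_neg hj6] at hx
  rw [bSeq, if_neg (by omega)]
  calc 8 * a ≤ 8 * i := by have := le_of_mem_Pblock hx; omega
    _ ≤ 2 ^ i := eight_mul_le_two_pow (by omega)

lemma eight_mul_Edig_le_qSeq (n : ℕ) : 8 * Edig n ≤ qSeq n := by
  rw [Edig, qSeq, List.getD_eq_getElem?_getD]
  cases h : (prefixUpTo (iOf n))[n - 1]? with
  | none => simp
  | some a => exact eight_mul_le_bSeq_of_mem_prefixUpTo (List.mem_of_getElem? h)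

/-- For the construction `x_i = (0,1)`, `b_i = 2`, `l_i = 0` for `i ≤ 5` and
`x_i = P_{i,i²}`, `b_i = 2^i`, `l_i = 2^{4i²}` for `i ≥ 6`, the number `x` is not
`Q`-distribution normal, i.e. the sequence `{T_{Q,n}(x)}_{n=0}^∞` is not u.d. mod 1. -/
theorem stmt8 : ¬ UDMod1 (TQ qSeq xVal) := by
  have hq : ∀ k, 2 ≤ qSeq k := fun k => two_le_bSeq _
  have hE : ∀ k, (Edig k : ℝ) ≤ 1 / 8 * qSeq k := fun k => by
    have : (8 : ℝ) * Edig k ≤ qSeq k := by exact_mod_cast eight_mul_Edig_le_qSeq k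
    linarith
  have hx : xVal = cantorSeries qSeq Edig := rfl
  refine not_UDMod1_of_fract_le (c := 2 * (1 / 8)) (fun n => ?_) (by norm_num)
  rw [TQ, Int.fract_fract, hx]
  exact TQ_cantorSeries_le hq hE (by norm_num) n
end

section
/- There exist a basic sequence Q and a real number x in [0,1) such that x is Q-normal but x is not Q-distribution normal. -/
/-- `Q_n^{(k)} = Σ_{j=1}^n 1/(q_j q_{j+1} ⋯ q_{j+k-1})` for a basic sequence `q` (1-indexed). -/
noncomputable def QNkG (q : ℕ → ℕ) (k n : ℕ) : ℝ :=
  ∑ j ∈ Finset.Icc 1 n, (∏ t ∈ Finset.range k, (q (j + t) : ℝ))⁻¹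

/-- `N_n^Q(B, x)`: the number of occurrences of the block `B` starting at a position
no greater than `n` in the `Q`-Cantor series expansion `(E_1, E_2, …)` of `x`. -/
def NQG (E : ℕ → ℕ) (B : List ℕ) (n : ℕ) : ℕ :=
  ((Finset.Icc 1 n).filter fun j => (List.range B.length).map (fun t => E (j + t)) = B).card

/-- A real number whose `Q`-Cantor series digit sequence is `E` is `Q`-normal of order `k`
if for every block `B` of length `k`, `N_n^Q(B,x)/Q_n^{(k)} → 1`. -/
def QNormalOfOrder (q E : ℕ → ℕ) (k : ℕ) : Prop :=
  ∀ B : List ℕ, B.length = k →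
    Filter.Tendsto (fun n => (NQG E B n : ℝ) / QNkG q k n) Filter.atTop (nhds 1)

/-- `Q`-normality: `Q`-normality of order `k` for every `k ≥ 1`. -/
def QNormal (q E : ℕ → ℕ) : Prop := ∀ k : ℕ, 1 ≤ k → QNormalOfOrder q E k

/-- The value `Σ_{n=1}^∞ E_n/(q_1 ⋯ q_n)` of a `Q`-Cantor series with digits `E` (1-indexed). -/
noncomputable def cantorVal (q E : ℕ → ℕ) : ℝ :=
  ∑' n : ℕ, (E (n + 1) : ℝ) / ∏ m ∈ Finset.range (n + 1), (q (m + 1) : ℝ)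

/-
The digits come in blocks; block `i` has base `m = i + 2` and is cut into units of
`4m` slots: `m` digit slots, which spell the base-`m` expansion of the unit's index, and `3m`
marker slots, which carry the digit `m` in a huge base. Over `m ^ m` consecutive units every word
of length `k ≤ m` is read, inside the digit slots, exactly as often as its weight `m ^ (-k)` in
`Q_n^{(k)}` predicts, while windows meeting a marker match no block with entries below `m` and
weigh almost nothing. So each block adds a bounded discrepancy to `N_n^Q(B, x) - Q_n^{(k)}`, which
the next block outweighs by choosing the block lengths fast growing: `x` is `Q`-normal. On the
other hand the tail of the expansion after a marker slot is below `1/2`, and `3/4` of all slots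
are markers, so along the block ends `T_{Q,n}(x)` falls into `[1/2, 1)` with frequency at most
`1/4` instead of `1/2`.
-/

open Finset Filter Topology

section CantorSeries

noncomputable def cantorTail (q E : ℕ → ℕ) (n : ℕ) : ℝ :=
  ∑' j : ℕ, (E (n + 1 + j) : ℝ) / ∏ m ∈ range (j + 1), (q (n + 1 + m) : ℝ)

variable {q E : ℕ → ℕ}

lemma cast_pos_of_two_le (hq : ∀ n, 1 ≤ n → 2 ≤ q n) {n : ℕ} (hn : 1 ≤ n) :
    (0 : ℝ) < q n := by
  exact_mod_cast (hq n hn).trans_lt' two_pos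

lemma cantorVal_eq_cantorTail_zero : cantorVal q E = cantorTail q E 0 := by
  simp only [cantorVal, cantorTail, zero_add, add_comm 1]

lemma cantorTail_term_le (hq : ∀ n, 1 ≤ n → 2 ≤ q n) (hE : ∀ n, 1 ≤ n → E n < q n) (n j : ℕ) :
    (E (n + 1 + j) : ℝ) / ∏ m ∈ range (j + 1), (q (n + 1 + m) : ℝ) ≤ (1 / 2) ^ j := by
  have hpow : (2 : ℝ) ^ j ≤ ∏ m ∈ range j, (q (n + 1 + m) : ℝ) := by
    simpa using prod_le_prod (s := range j) (f := fun _ => (2 : ℝ)) (by simp)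
      fun m _ => by exact_mod_cast hq _ (by omega)
  have hqpos : (0 : ℝ) < q (n + 1 + j) := cast_pos_of_two_le hq (by omega)
  calc (E (n + 1 + j) : ℝ) / ∏ m ∈ range (j + 1), (q (n + 1 + m) : ℝ)
      ≤ q (n + 1 + j) / ((∏ m ∈ range j, (q (n + 1 + m) : ℝ)) * q (n + 1 + j)) := by
        rw [prod_range_succ]; gcongr; exact_mod_cast (hE _ (by omega)).le
    _ = (∏ m ∈ range j, (q (n + 1 + m) : ℝ))⁻¹ := by field_simp
    _ ≤ (1 / 2) ^ j := by rw [one_div, inv_pow]; gcongr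

lemma cantorTail_term_nonneg (n j : ℕ) :
    0 ≤ (E (n + 1 + j) : ℝ) / ∏ m ∈ range (j + 1), (q (n + 1 + m) : ℝ) := by
  positivity

lemma summable_cantorTail (hq : ∀ n, 1 ≤ n → 2 ≤ q n) (hE : ∀ n, 1 ≤ n → E n < q n) (n : ℕ) :
    Summable fun j => (E (n + 1 + j) : ℝ) / ∏ m ∈ range (j + 1), (q (n + 1 + m) : ℝ) :=
  .of_nonneg_of_le (cantorTail_term_nonneg n) (cantorTail_term_le hq hE n)
    (summable_geometric_of_lt_one (by norm_num) (by norm_num))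

lemma cantorTail_nonneg (n : ℕ) : 0 ≤ cantorTail q E n :=
  tsum_nonneg (cantorTail_term_nonneg n)

lemma cantorTail_eq (hq : ∀ n, 1 ≤ n → 2 ≤ q n) (hE : ∀ n, 1 ≤ n → E n < q n) (n : ℕ) :
    cantorTail q E n = (E (n + 1) + cantorTail q E (n + 1)) / q (n + 1) := by
  have hq0 : (q (n + 1) : ℝ) ≠ 0 := (cast_pos_of_two_le hq le_add_self).ne'
  rw [cantorTail, (summable_cantorTail hq hE n).tsum_eq_zero_add, eq_div_iff hq0, add_mul,
    cantorTail, ← tsum_mul_right]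
  congr 1
  · simp [hq0]
  · congr 1
    ext j
    rw [prod_range_succ']
    simp only [add_assoc, add_comm 1, add_zero]
    field_simp

lemma sum_range_cantorTail_le (hq : ∀ n, 1 ≤ n → 2 ≤ q n) (hE : ∀ n, 1 ≤ n → E n < q n)
    (n J : ℕ) :
    ∑ j ∈ range J, (E (n + 1 + j) : ℝ) / ∏ m ∈ range (j + 1), (q (n + 1 + m) : ℝ)
      ≤ 1 - (∏ m ∈ range J, (q (n + 1 + m) : ℝ))⁻¹ := by
  induction J with
  | zero => simp
  | succ J ih =>
    have hP : (0 : ℝ) < ∏ m ∈ range J, (q (n + 1 + m) : ℝ) :=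
      prod_pos fun m _ => cast_pos_of_two_le hq (by omega)
    have hqpos : (0 : ℝ) < q (n + 1 + J) := cast_pos_of_two_le hq (by omega)
    have hEq : (E (n + 1 + J) : ℝ) ≤ q (n + 1 + J) - 1 := by
      have := hE (n + 1 + J) (by omega); rw [le_sub_iff_add_le]; exact_mod_cast this
    rw [sum_range_succ, prod_range_succ]
    calc _ ≤ 1 - (∏ m ∈ range J, (q (n + 1 + m) : ℝ))⁻¹
          + (q (n + 1 + J) - 1) / ((∏ m ∈ range J, (q (n + 1 + m) : ℝ)) * q (n + 1 + J)) := by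
          gcongr
      _ = _ := by field_simp; ring

lemma cantorTail_le_one (hq : ∀ n, 1 ≤ n → 2 ≤ q n) (hE : ∀ n, 1 ≤ n → E n < q n) (n : ℕ) :
    cantorTail q E n ≤ 1 :=
  Real.tsum_le_of_sum_range_le (cantorTail_term_nonneg n) fun J =>
    (sum_range_cantorTail_le hq hE n J).trans (sub_le_self _ (inv_nonneg.2 (by positivity)))

lemma cantorTail_lt_one (hq : ∀ n, 1 ≤ n → 2 ≤ q n) (hE : ∀ n, 1 ≤ n → E n < q n)
    (hinf : ∀ N, ∃ n, N ≤ n ∧ E n ≠ q n - 1) (n : ℕ) : cantorTail q E n < 1 := by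
  obtain ⟨n', hn', hne⟩ := hinf (n + 1)
  obtain ⟨d, rfl⟩ := Nat.exists_eq_add_of_le hn'
  induction d generalizing n with
  | zero =>
    rw [add_zero] at hne
    have hqpos : (0 : ℝ) < q (n + 1) := cast_pos_of_two_le hq le_add_self
    have h2 : (E (n + 1) : ℝ) + 2 ≤ q (n + 1) := by
      have := hE (n + 1) le_add_self; exact_mod_cast (by omega : E (n + 1) + 2 ≤ q (n + 1))
    rw [cantorTail_eq hq hE, div_lt_one hqpos]
    linarith [cantorTail_le_one hq hE (n + 1)]
  | succ d ih =>
    have hqpos : (0 : ℝ) < q (n + 1) := cast_pos_of_two_le hq le_add_self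
    have h1 : (E (n + 1) : ℝ) + 1 ≤ q (n + 1) := by exact_mod_cast hE (n + 1) le_add_self
    have := ih (n + 1) (by omega) (by rwa [add_right_comm])
    rw [cantorTail_eq hq hE, div_lt_one hqpos]
    linarith

lemma exists_nat_prod_mul_cantorVal (hq : ∀ n, 1 ≤ n → 2 ≤ q n) (hE : ∀ n, 1 ≤ n → E n < q n)
    (n : ℕ) :
    ∃ A : ℕ, (∏ m ∈ range n, (q (m + 1) : ℝ)) * cantorVal q E = A + cantorTail q E n := by
  induction n with
  | zero => exact ⟨0, by simp [cantorVal_eq_cantorTail_zero]⟩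
  | succ n ih =>
    obtain ⟨A, hA⟩ := ih
    have hq0 : (q (n + 1) : ℝ) ≠ 0 := (cast_pos_of_two_le hq le_add_self).ne'
    refine ⟨q (n + 1) * A + E (n + 1), ?_⟩
    rw [prod_range_succ, mul_right_comm, hA, cantorTail_eq hq hE n]
    push_cast
    field_simp
    ring

lemma TQ_cantorVal (hq : ∀ n, 1 ≤ n → 2 ≤ q n) (hE : ∀ n, 1 ≤ n → E n < q n)
    (hinf : ∀ N, ∃ n, N ≤ n ∧ E n ≠ q n - 1) (n : ℕ) :
    TQ q (cantorVal q E) n = cantorTail q E n := by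
  obtain ⟨A, hA⟩ := exists_nat_prod_mul_cantorVal hq hE n
  rw [TQ, hA, Int.fract_natCast_add, Int.fract_eq_self]
  exact ⟨cantorTail_nonneg n, cantorTail_lt_one hq hE hinf n⟩

lemma cantorVal_mem_Ico (hq : ∀ n, 1 ≤ n → 2 ≤ q n) (hE : ∀ n, 1 ≤ n → E n < q n)
    (hinf : ∀ N, ∃ n, N ≤ n ∧ E n ≠ q n - 1) : cantorVal q E ∈ Set.Ico 0 1 := by
  rw [cantorVal_eq_cantorTail_zero]
  exact ⟨cantorTail_nonneg 0, cantorTail_lt_one hq hE hinf 0⟩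

end CantorSeries

section PeriodicSums

open Function

lemma Finset.sum_range_mul_eq_sum_sum {M : Type*} [AddCommMonoid M] (f : ℕ → M) (a b : ℕ) :
    ∑ x ∈ range (a * b), f x = ∑ u ∈ range b, ∑ r ∈ range a, f (a * u + r) := by
  induction b with
  | zero => simp
  | succ b ih => rw [mul_add_one, sum_range_add, ih, sum_range_succ]

lemma Function.Periodic.sum_range_mul {M : Type*} [AddCommMonoid M] {f : ℕ → M} {a : ℕ}
    (hf : Periodic f a) (b : ℕ) : ∑ x ∈ range (a * b), f x = b • ∑ x ∈ range a, f x := by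
  have hu : ∀ u, ∑ r ∈ range a, f (a * u + r) = ∑ r ∈ range a, f r := fun u =>
    sum_congr rfl fun r _ => by rw [add_comm, mul_comm]; exact hf.nat_mul u r
  rw [sum_range_mul_eq_sum_sum, sum_congr rfl fun u _ => hu u, sum_const, card_range]

lemma Function.Periodic.abs_sum_range_le {f : ℕ → ℝ} {a : ℕ} (hf : Periodic f a) (ha : 0 < a)
    (hsum : ∑ x ∈ range a, f x = 0) (T : ℕ) :
    |∑ x ∈ range T, f x| ≤ ∑ x ∈ range a, |f x| := by
  have hshift : ∀ x, f (a * (T / a) + x) = f x := fun x => by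
    rw [add_comm, mul_comm]; exact hf.nat_mul _ x
  rw [← Nat.div_add_mod T a, sum_range_add, hf.sum_range_mul, hsum, smul_zero, zero_add]
  simp only [hshift]
  exact (abs_sum_le_sum_abs _ _).trans <|
    sum_le_sum_of_subset_of_nonneg (range_mono (Nat.mod_lt _ ha).le) fun _ _ _ => abs_nonneg _

lemma card_filter_range_mul_mod_lt {a c : ℕ} (hc : c ≤ a) (N : ℕ) :
    #{o ∈ range (a * N) | o % a < c} = N * c := by
  have hper : Periodic (fun o => if o % a < c then 1 else 0) a := fun o => by simp
  have hperiod : {o ∈ range a | o % a < c} = range c := by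
    ext o
    simp only [mem_filter, mem_range]
    constructor
    · rintro ⟨h, h'⟩; rwa [Nat.mod_eq_of_lt h] at h'
    · intro h; rw [Nat.mod_eq_of_lt (by omega)]; omega
  rw [card_filter, hper.sum_range_mul, smul_eq_mul, ← card_filter, hperiod, card_range]

end PeriodicSums

lemma mul_add_div_pow_succ {m u r : ℕ} (hr : r < m) (j : ℕ) :
    (m * u + r) / m ^ (j + 1) = u / m ^ j := by
  rw [pow_succ', ← Nat.div_div_eq_div_mul, Nat.mul_add_div (by omega), Nat.div_eq_of_lt hr,
    add_zero]

lemma card_filter_digits_eq {m : ℕ} (K r k : ℕ) (b : ℕ → ℕ) (hrk : r + k ≤ K)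
    (hb : ∀ s < k, b s < m) :
    #{u ∈ range (m ^ K) | ∀ s < k, u / m ^ (r + s) % m = b s} = m ^ (K - k) := by
  induction K generalizing r k b with
  | zero => obtain ⟨rfl, rfl⟩ : r = 0 ∧ k = 0 := by omega
            simp
  | succ K ih =>
    rw [card_filter, pow_succ', sum_range_mul_eq_sum_sum]
    rcases r with _ | r
    · rcases k with _ | k
      · simp [pow_succ, mul_comm]
      · have inner : ∀ u, (∑ d ∈ range m,
            if ∀ s < k + 1, (m * u + d) / m ^ (0 + s) % m = b s then 1 else 0) =
            if ∀ s < k, u / m ^ (0 + s) % m = b (s + 1) then 1 else 0 := fun u => by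
          have hiff : ∀ d ∈ range m, ((∀ s < k + 1, (m * u + d) / m ^ (0 + s) % m = b s) ↔
              b 0 = d ∧ ∀ s < k, u / m ^ (0 + s) % m = b (s + 1)) := fun d hd => by
            rw [mem_range] at hd
            simp only [Nat.forall_lt_succ_left, zero_add, pow_zero, Nat.div_one,
              Nat.mul_add_mod, Nat.mod_eq_of_lt hd, mul_add_div_pow_succ hd, eq_comm]
          rw [sum_congr rfl fun d hd => if_congr (hiff d hd) rfl rfl]
          simp [ite_and, hb 0 k.succ_pos]
        rw [sum_congr rfl fun u _ => inner u, ← card_filter,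
          ih 0 k (fun s => b (s + 1)) (by omega) fun s hs => hb _ (by omega)]
        congr 1; omega
    · have inner : ∀ u, (∑ d ∈ range m,
          if ∀ s < k, (m * u + d) / m ^ (r + 1 + s) % m = b s then 1 else 0) =
          m * if ∀ s < k, u / m ^ (r + s) % m = b s then 1 else 0 := fun u => by
        have hiff : ∀ d ∈ range m, ((∀ s < k, (m * u + d) / m ^ (r + 1 + s) % m = b s) ↔
            ∀ s < k, u / m ^ (r + s) % m = b s) := fun d hd => by
          simp only [add_right_comm r 1, mul_add_div_pow_succ (mem_range.1 hd)]
        rw [sum_congr rfl fun d hd => if_congr (hiff d hd) rfl rfl, sum_const, card_range,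
          smul_eq_mul]
      rw [sum_congr rfl fun u _ => inner u, ← mul_sum, ← card_filter, ih r k b (by omega) hb,
        ← pow_succ']
      congr 1; omega

lemma Nat.add_mod_div_of_mod_add_lt {a o s : ℕ} (h : o % a + s < a) :
    (o + s) % a = o % a + s ∧ (o + s) / a = o / a := by
  have ha : 0 < a := by omega
  have ho : o + s = (o % a + s) + a * (o / a) := by rw [add_right_comm, Nat.mod_add_div]
  rw [ho, Nat.add_mul_mod_self_left, Nat.mod_eq_of_lt h, Nat.add_mul_div_left _ _ ha,
    Nat.div_eq_of_lt h, zero_add]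
  exact ⟨rfl, rfl⟩

section Units

/- A unit of base `m` has `4m` slots: `m` digit slots followed by `3m` marker slots. The digit
slots of the `u`-th unit carry the base-`m` digits of `u`, least significant first, so any `m ^ m`
consecutive units run through all words of length `m`. -/

variable (m : ℕ)

def unitBase (M o : ℕ) : ℕ := if o % (4 * m) < m then m else M

def unitDigit (o : ℕ) : ℕ := if o % (4 * m) < m then o / (4 * m) / m ^ (o % (4 * m)) % m else m

-- Whether the word `b` of length `k` is read from slot `o` on, minus the weight `m ^ (-k)` that
-- `Q_n^{(k)}` gives to a window lying inside the digit slots.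
noncomputable def windowDefect (k : ℕ) (b : ℕ → ℕ) (o : ℕ) : ℝ :=
  (if o % (4 * m) + k ≤ m ∧ ∀ s < k, o / (4 * m) / m ^ (o % (4 * m) + s) % m = b s then 1 else 0)
    - (if o % (4 * m) + k ≤ m then 1 else 0) / (m : ℝ) ^ k

variable {m}

lemma unitDigit_lt_unitBase {M : ℕ} (hM : m < M) (o : ℕ) : unitDigit m o < unitBase m M o := by
  unfold unitDigit unitBase
  split_ifs with h
  · exact Nat.mod_lt _ (by omega)
  · exact hM

lemma windowDefect_periodic (hm : 0 < m) (k : ℕ) (b : ℕ → ℕ) :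
    Function.Periodic (windowDefect m k b) (4 * m * m ^ m) := fun o => by
  have hmod : (o + 4 * m * m ^ m) % (4 * m) = o % (4 * m) := Nat.add_mul_mod_self_left _ _ _
  have hdiv : (o + 4 * m * m ^ m) / (4 * m) = o / (4 * m) + m ^ m :=
    Nat.add_mul_div_left _ _ (by omega)
  have hdigit : ∀ x j, j < m → (x + m ^ m) / m ^ j % m = x / m ^ j % m := fun x j hj => by
    rw [show m ^ m = m ^ j * (m * m ^ (m - j - 1)) by rw [← pow_succ', ← pow_add]; congr 1; omega,
      Nat.add_mul_div_left _ _ (by positivity), Nat.add_mul_mod_self_left]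
  simp only [windowDefect, hmod, hdiv]
  congr 2
  exact propext <| and_congr_right fun h => forall₂_congr fun s hs => by rw [hdigit _ _ (by omega)]

lemma sum_windowDefect_eq_zero (hm : 0 < m) {k : ℕ} (hk : k ≤ m) {b : ℕ → ℕ}
    (hb : ∀ s < k, b s < m) : ∑ o ∈ range (4 * m * m ^ m), windowDefect m k b o = 0 := by
  rw [sum_range_mul_eq_sum_sum, sum_comm]
  refine sum_eq_zero fun r hr => ?_
  have hr' := mem_range.1 hr
  have hslot : ∀ u, (4 * m * u + r) % (4 * m) = r ∧ (4 * m * u + r) / (4 * m) = u := fun u =>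
    ⟨by rw [Nat.mul_add_mod, Nat.mod_eq_of_lt hr'],
      by rw [Nat.mul_add_div (by omega), Nat.div_eq_of_lt hr', add_zero]⟩
  simp only [windowDefect, hslot]
  by_cases hfit : r + k ≤ m
  · have hcount := card_filter_digits_eq m r k b hfit hb
    simp only [hfit, true_and, if_true, sum_sub_distrib, sum_boole, hcount, sum_const, card_range,
      nsmul_eq_mul]
    push_cast
    rw [pow_sub₀ _ (by exact_mod_cast hm.ne') hk, one_div, sub_self]
  · simp [hfit]

lemma abs_windowDefect_le_one (hm : 0 < m) (k : ℕ) (b : ℕ → ℕ) (o : ℕ) :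
    |windowDefect m k b o| ≤ 1 := by
  have hpow : (1 : ℝ) ≤ (m : ℝ) ^ k := one_le_pow₀ (by exact_mod_cast hm)
  have h0 : (0 : ℝ) ≤ 1 / (m : ℝ) ^ k := by positivity
  have h1 : 1 / (m : ℝ) ^ k ≤ 1 := (div_le_one (by positivity)).2 hpow
  unfold windowDefect
  split_ifs with hX hW hW
  · rw [abs_le]; constructor <;> linarith
  · exact absurd hX.1 hW
  · rw [zero_sub, abs_neg, abs_le]; constructor <;> linarith
  · simp

lemma abs_sum_windowDefect_le (hm : 0 < m) {k : ℕ} (hk : k ≤ m) {b : ℕ → ℕ}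
    (hb : ∀ s < k, b s < m) (T : ℕ) :
    |∑ o ∈ range T, windowDefect m k b o| ≤ 4 * m * m ^ m :=
  ((windowDefect_periodic hm k b).abs_sum_range_le (by positivity)
    (sum_windowDefect_eq_zero hm hk hb) T).trans <| by
      simpa using sum_le_sum fun o (_ : o ∈ range (4 * m * m ^ m)) =>
        abs_windowDefect_le_one hm k b o

end Units

lemma List.map_range_eq_iff {k : ℕ} {B : List ℕ} (f : ℕ → ℕ) (h : B.length = k) :
    (List.range k).map f = B ↔ ∀ s < k, f s = B.getD s 0 := by
  subst h
  simp +contextual [List.ext_getElem_iff]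

lemma sum_Icc_one_eq_sum_range (f : ℕ → ℝ) (n : ℕ) :
    ∑ j ∈ Icc 1 n, f j = ∑ t ∈ range n, f (t + 1) := by
  rw [range_eq_Ico, sum_Ico_add' f 0 n 1]
  rfl

lemma QNkG_eq_sum_range (q : ℕ → ℕ) (k n : ℕ) :
    QNkG q k n = ∑ t ∈ range n, (∏ s ∈ range k, (q (t + 1 + s) : ℝ))⁻¹ :=
  sum_Icc_one_eq_sum_range _ n

lemma NQG_eq_sum_range (E : ℕ → ℕ) (B : List ℕ) (n : ℕ) :
    (NQG E B n : ℝ) =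
      ∑ t ∈ range n, if ∀ s < B.length, E (t + 1 + s) = B.getD s 0 then 1 else 0 := by
  rw [NQG, ← sum_boole, sum_Icc_one_eq_sum_range]
  simp only [List.map_range_eq_iff _ rfl]

lemma abs_div_sub_one_le {N Q e : ℝ} {i : ℕ} (hNQ : |N - Q| ≤ e) (hQ : i * e ≤ Q) (he : 0 < e)
    (hi : 0 < i) : |N / Q - 1| ≤ 1 / i := by
  have hQpos : 0 < Q := hQ.trans_lt' (by positivity)
  rw [div_sub_one hQpos.ne', abs_div, abs_of_pos hQpos, div_le_div_iff₀ hQpos (by positivity)]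
  nlinarith

namespace QNormalCounterexample

def period (i : ℕ) : ℕ := 4 * (i + 2) * (i + 2) ^ (i + 2)

-- Block `i` is made of `reps s i` periods, `s` being the position where it starts: large enough
-- for the block to outweigh `i + 1` times the discrepancy accumulated up to the next block.
def reps (s i : ℕ) : ℕ := (i + 1) * (s + (i + 2) * (period (i + 1) + 1))

def blockStart : ℕ → ℕ
  | 0 => 0
  | i + 1 => blockStart i + reps (blockStart i) i * period i

def blockLen (i : ℕ) : ℕ := reps (blockStart i) i * period i

-- large enough for the markers of a block to weigh at most `1/2` in `Q_n^{(k)}` in total, and for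
-- the tail of the expansion after a marker to be below `1/2`
def markerBase (i : ℕ) : ℕ := 2 * blockLen i

lemma blockStart_succ (i : ℕ) : blockStart (i + 1) = blockStart i + blockLen i := rfl

lemma blockLen_eq (i : ℕ) :
    blockLen i = 4 * (i + 2) * ((i + 2) ^ (i + 2) * reps (blockStart i) i) := by
  unfold blockLen period; ring

lemma period_pos (i : ℕ) : 0 < period i := by unfold period; positivity

lemma period_mono : Monotone period := fun i j h => by
  unfold period
  gcongr
  omega

lemma period_le_blockLen (i : ℕ) : period i ≤ blockLen i :=
  Nat.le_mul_of_pos_left _ (by unfold reps; positivity)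

lemma blockStart_strictMono : StrictMono blockStart :=
  strictMono_nat_of_lt_succ fun i => by
    have := period_le_blockLen i; have := period_pos i; rw [blockStart_succ]; omega

lemma exists_lt_blockStart (t : ℕ) : ∃ i, t < blockStart (i + 1) :=
  ⟨t, (Nat.lt_succ_self t).trans_le (blockStart_strictMono.le_apply)⟩

def blockIdx (t : ℕ) : ℕ := Nat.find (exists_lt_blockStart t)

lemma lt_blockStart_blockIdx_succ (t : ℕ) : t < blockStart (blockIdx t + 1) :=
  Nat.find_spec (exists_lt_blockStart t)

lemma blockStart_blockIdx_le (t : ℕ) : blockStart (blockIdx t) ≤ t := by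
  rcases h : blockIdx t with _ | i
  · exact Nat.zero_le t
  · unfold blockIdx at h
    exact not_lt.1 (Nat.find_min (exists_lt_blockStart t) (by omega : i < Nat.find _))

lemma blockIdx_blockStart_add {i o : ℕ} (ho : o < blockLen i) :
    blockIdx (blockStart i + o) = i :=
  (Nat.find_eq_iff _).2 ⟨by rw [blockStart_succ]; omega, fun j hj =>
    not_lt.2 <| (blockStart_strictMono.monotone hj).trans (Nat.le_add_right _ _)⟩

lemma le_blockIdx {i t : ℕ} (h : blockStart i ≤ t) : i ≤ blockIdx t :=
  not_lt.1 fun hlt => (lt_blockStart_blockIdx_succ t).not_ge <|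
    (blockStart_strictMono.monotone hlt).trans h

def qAt (t : ℕ) : ℕ :=
  unitBase (blockIdx t + 2) (markerBase (blockIdx t)) (t - blockStart (blockIdx t))

def eAt (t : ℕ) : ℕ := unitDigit (blockIdx t + 2) (t - blockStart (blockIdx t))

lemma qAt_blockStart_add {i o : ℕ} (ho : o < blockLen i) :
    qAt (blockStart i + o) = unitBase (i + 2) (markerBase i) o := by
  simp [qAt, blockIdx_blockStart_add ho]

lemma eAt_blockStart_add {i o : ℕ} (ho : o < blockLen i) :
    eAt (blockStart i + o) = unitDigit (i + 2) o := by
  simp [eAt, blockIdx_blockStart_add ho]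

-- the 1-indexed basic sequence and digits
def seqQ (n : ℕ) : ℕ := qAt (n - 1)

def seqE (n : ℕ) : ℕ := eAt (n - 1)

lemma unitLen_le_blockLen (i : ℕ) : 4 * (i + 2) ≤ blockLen i :=
  (Nat.le_mul_of_pos_right _ (by positivity)).trans (period_le_blockLen i)

lemma lt_markerBase (i : ℕ) : i + 2 < markerBase i := by
  have := unitLen_le_blockLen i; unfold markerBase; omega

lemma two_le_qAt (t : ℕ) : 2 ≤ qAt t := by
  unfold qAt unitBase
  split_ifs
  · omega
  · have := lt_markerBase (blockIdx t); omega

lemma two_le_seqQ (n : ℕ) : 2 ≤ seqQ n := two_le_qAt _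

lemma seqE_lt_seqQ (n : ℕ) : seqE n < seqQ n :=
  unitDigit_lt_unitBase (lt_markerBase _) _

lemma exists_seqE_ne (N : ℕ) : ∃ n, N ≤ n ∧ seqE n ≠ seqQ n - 1 := by
  have hslot : (N + 2) % (4 * (N + 2)) = N + 2 := Nat.mod_eq_of_lt (by omega)
  have hlen : N + 2 < blockLen N := by have := unitLen_le_blockLen N; omega
  refine ⟨blockStart N + (N + 2) + 1,
    by have := blockStart_strictMono.le_apply (x := N); omega, ?_⟩
  simp only [seqE, seqQ, Nat.add_sub_cancel, eAt_blockStart_add hlen, qAt_blockStart_add hlen,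
    unitDigit, unitBase, hslot, lt_irrefl, if_false]
  unfold markerBase
  omega

lemma add_lt_blockLen {i o s : ℕ} (ho : o < blockLen i)
    (hs : o % (4 * (i + 2)) + s < 4 * (i + 2)) : o + s < blockLen i := by
  obtain ⟨c, hc⟩ : 4 * (i + 2) ∣ blockLen i := ⟨_, blockLen_eq i⟩
  have hq : o / (4 * (i + 2)) < c := Nat.div_lt_of_lt_mul (hc ▸ ho)
  have := Nat.div_add_mod o (4 * (i + 2))
  calc o + s < 4 * (i + 2) * (o / (4 * (i + 2)) + 1) := by rw [mul_add_one]; omega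
    _ ≤ 4 * (i + 2) * c := Nat.mul_le_mul_left _ hq
    _ = blockLen i := hc.symm

lemma qAt_eAt_of_fits {i o s : ℕ} (ho : o < blockLen i) (hs : o % (4 * (i + 2)) + s < i + 2) :
    qAt (blockStart i + o + s) = i + 2 ∧ eAt (blockStart i + o + s) =
      o / (4 * (i + 2)) / (i + 2) ^ (o % (4 * (i + 2)) + s) % (i + 2) := by
  obtain ⟨hmod, hdiv⟩ := Nat.add_mod_div_of_mod_add_lt (a := 4 * (i + 2)) (o := o) (s := s)
    (by omega)
  have hlt := add_lt_blockLen ho (s := s) (by omega)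
  rw [add_assoc, qAt_blockStart_add hlt, eAt_blockStart_add hlt, unitBase, unitDigit, hmod, hdiv,
    if_pos hs, if_pos hs]
  exact ⟨rfl, rfl⟩

lemma exists_marker_of_not_fits {i k o : ℕ} (hk : 0 < k) (ho : o < blockLen i)
    (hfit : ¬o % (4 * (i + 2)) + k ≤ i + 2) :
    ∃ s < k, qAt (blockStart i + o + s) = markerBase i ∧ eAt (blockStart i + o + s) = i + 2 := by
  have hr : o % (4 * (i + 2)) < 4 * (i + 2) := Nat.mod_lt _ (by omega)
  obtain ⟨hmod, -⟩ := Nat.add_mod_div_of_mod_add_lt (a := 4 * (i + 2)) (o := o)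
    (s := i + 2 - o % (4 * (i + 2))) (by omega)
  have hlt := add_lt_blockLen ho (s := i + 2 - o % (4 * (i + 2))) (by omega)
  refine ⟨i + 2 - o % (4 * (i + 2)), by omega, ?_⟩
  rw [add_assoc, qAt_blockStart_add hlt, eAt_blockStart_add hlt, unitBase, unitDigit, hmod,
    if_neg (by omega), if_neg (by omega)]
  exact ⟨rfl, rfl⟩

-- The summands of `N_n^Q(B, x)` and of `Q_n^{(k)}` at the 0-indexed position `t`.
noncomputable def matchIndicator (k : ℕ) (b : ℕ → ℕ) (t : ℕ) : ℝ :=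
  if ∀ s < k, eAt (t + s) = b s then 1 else 0

noncomputable def weight (k t : ℕ) : ℝ := (∏ s ∈ range k, (qAt (t + s) : ℝ))⁻¹

lemma weight_nonneg (k t : ℕ) : 0 ≤ weight k t := by unfold weight; positivity

lemma weight_le_one (k t : ℕ) : weight k t ≤ 1 :=
  inv_le_one_of_one_le₀ <| Finset.one_le_prod fun s _ => by
    exact_mod_cast (two_le_qAt _).trans' one_le_two

lemma matchIndicator_eq {i k o : ℕ} {b : ℕ → ℕ} (hk : 0 < k) (hb : ∀ s < k, b s < i + 2)
    (ho : o < blockLen i) : matchIndicator k b (blockStart i + o) =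
      if o % (4 * (i + 2)) + k ≤ i + 2 ∧
        ∀ s < k, o / (4 * (i + 2)) / (i + 2) ^ (o % (4 * (i + 2)) + s) % (i + 2) = b s
      then 1 else 0 := by
  refine if_congr ?_ rfl rfl
  by_cases hfit : o % (4 * (i + 2)) + k ≤ i + 2
  · simp only [hfit, true_and]
    exact forall₂_congr fun s hs => by rw [(qAt_eAt_of_fits ho (by omega)).2]
  · obtain ⟨s, hs, -, he⟩ := exists_marker_of_not_fits hk ho hfit
    simp only [hfit, false_and, iff_false, not_forall]
    exact ⟨s, hs, by rw [he]; exact (hb s hs).ne'⟩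

lemma weight_of_fits {i k o : ℕ} (ho : o < blockLen i) (hfit : o % (4 * (i + 2)) + k ≤ i + 2) :
    weight k (blockStart i + o) = (((i + 2 : ℕ) : ℝ) ^ k)⁻¹ := by
  rw [weight, prod_congr rfl fun s hs => by
    rw [(qAt_eAt_of_fits ho (by simp at hs; omega)).1], prod_const, card_range]

lemma weight_le_of_not_fits {i k o : ℕ} (hk : 0 < k) (ho : o < blockLen i)
    (hfit : ¬o % (4 * (i + 2)) + k ≤ i + 2) :
    weight k (blockStart i + o) ≤ (markerBase i : ℝ)⁻¹ := by
  obtain ⟨s, hs, hq, -⟩ := exists_marker_of_not_fits hk ho hfit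
  have hle : markerBase i ≤ ∏ s ∈ range k, qAt (blockStart i + o + s) :=
    hq ▸ single_le_prod' (fun s _ => (two_le_qAt _).trans' one_le_two) (mem_range.2 hs)
  rw [weight, ← Nat.cast_prod]
  exact inv_anti₀ (Nat.cast_pos.2 (by have := lt_markerBase i; omega)) (by exact_mod_cast hle)

lemma abs_sum_block_le {i k : ℕ} {b : ℕ → ℕ} (hk : 0 < k) (hkm : k ≤ i + 2)
    (hb : ∀ s < k, b s < i + 2) {T : ℕ} (hT : T ≤ blockLen i) :
    |∑ o ∈ range T, (matchIndicator k b (blockStart i + o) - weight k (blockStart i + o))|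
      ≤ period i + 1 := by
  -- the weight in excess of `(i + 2) ^ (-k)`, carried by the windows that meet a marker
  set excess : ℕ → ℝ := fun o => weight k (blockStart i + o) -
    (if o % (4 * (i + 2)) + k ≤ i + 2 then 1 else 0) / (((i + 2 : ℕ) : ℝ)) ^ k
  have hsplit :
      ∑ o ∈ range T, (matchIndicator k b (blockStart i + o) - weight k (blockStart i + o)) =
        ∑ o ∈ range T, windowDefect (i + 2) k b o - ∑ o ∈ range T, excess o := by
    rw [← sum_sub_distrib]
    refine sum_congr rfl fun o ho => ?_
    rw [matchIndicator_eq hk hb ((mem_range.1 ho).trans_le hT), windowDefect]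
    ring
  have hexcess : ∀ o ∈ range T, 0 ≤ excess o ∧ excess o ≤ (markerBase i : ℝ)⁻¹ := fun o ho => by
    have ho' := (mem_range.1 ho).trans_le hT
    by_cases hfit : o % (4 * (i + 2)) + k ≤ i + 2
    · simp [excess, hfit, weight_of_fits ho' hfit]
    · simpa [excess, hfit] using ⟨weight_nonneg _ _, weight_le_of_not_fits hk ho' hfit⟩
  have hsum_excess : |∑ o ∈ range T, excess o| ≤ 1 := by
    rw [abs_of_nonneg (sum_nonneg fun o ho => (hexcess o ho).1)]
    calc ∑ o ∈ range T, excess o ≤ ∑ o ∈ range T, (markerBase i : ℝ)⁻¹ :=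
          sum_le_sum fun o ho => (hexcess o ho).2
      _ = T / markerBase i := by simp [div_eq_mul_inv]
      _ ≤ 1 := by
        rw [div_le_one (Nat.cast_pos.2 (by have := lt_markerBase i; omega))]
        exact_mod_cast hT.trans (by unfold markerBase; omega)
  rw [hsplit]
  calc _ ≤ |∑ o ∈ range T, windowDefect (i + 2) k b o| + |∑ o ∈ range T, excess o| :=
        abs_sub _ _
    _ ≤ period i + 1 := by
      gcongr
      simpa [period] using abs_sum_windowDefect_le (by omega) hkm hb T

lemma abs_matchIndicator_sub_weight_le (k : ℕ) (b : ℕ → ℕ) (t : ℕ) :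
    |matchIndicator k b t - weight k t| ≤ 1 := by
  have := weight_nonneg k t; have := weight_le_one k t
  unfold matchIndicator
  split_ifs <;> rw [abs_le] <;> constructor <;> linarith

lemma abs_sum_range_blockStart_add_le {i0 k : ℕ} {b : ℕ → ℕ} (hk : 0 < k) (hkm : k ≤ i0 + 2)
    (hb : ∀ s < k, b s < i0 + 2) {i : ℕ} (hi : i0 ≤ i) {T : ℕ} (hT : T ≤ blockLen i) :
    |∑ t ∈ range (blockStart i + T), (matchIndicator k b t - weight k t)|
      ≤ blockStart i0 + (i + 1) * (period i + 1) := by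
  have hstep : ∀ i, i0 ≤ i → ∀ T ≤ blockLen i,
      |∑ t ∈ range (blockStart i + T), (matchIndicator k b t - weight k t)| ≤
        |∑ t ∈ range (blockStart i), (matchIndicator k b t - weight k t)| + (period i + 1) :=
    fun i hi T hT => by
      rw [sum_range_add]
      exact (abs_add_le _ _).trans (add_le_add le_rfl (abs_sum_block_le hk (by omega)
        (fun s hs => (hb s hs).trans_le (by omega)) hT))
  induction i, hi using Nat.le_induction generalizing T with
  | base =>
    have htriv :
        |∑ t ∈ range (blockStart i0), (matchIndicator k b t - weight k t)| ≤ blockStart i0 :=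
      (abs_sum_le_sum_abs _ _).trans <| by
        simpa using sum_le_sum fun t (_ : t ∈ range (blockStart i0)) =>
          abs_matchIndicator_sub_weight_le k b t
    have hP : (period i0 + 1 : ℝ) ≤ (i0 + 1) * (period i0 + 1) :=
      le_mul_of_one_le_left (by positivity) (by simp)
    linarith [hstep i0 le_rfl T hT]
  | succ i hi ih =>
    have h := ih (T := blockLen i) le_rfl
    rw [← blockStart_succ] at h
    have hmono : (period i : ℝ) ≤ period (i + 1) := by exact_mod_cast period_mono i.le_succ
    have := hstep (i + 1) (by omega) T hT
    push_cast at h ⊢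
    nlinarith

lemma reps_le_sum_block_weight {i k : ℕ} (hkm : k ≤ i + 2) :
    (reps (blockStart i) i : ℝ) ≤ ∑ o ∈ range (blockLen i), weight k (blockStart i + o) := by
  have hlow : ∀ o ∈ range (blockLen i),
      (if o % (4 * (i + 2)) < i + 2 - k + 1 then 1 else 0) / (((i + 2 : ℕ) : ℝ)) ^ k ≤
        weight k (blockStart i + o) := fun o ho => by
    split_ifs with h
    · rw [weight_of_fits (mem_range.1 ho) (by omega), one_div]
    · simpa using weight_nonneg _ _
  refine le_trans ?_ (sum_le_sum hlow)
  rw [← sum_div, sum_boole, blockLen_eq, card_filter_range_mul_mod_lt (by omega),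
    le_div_iff₀ (by positivity)]
  have hpow : (i + 2) ^ k ≤ (i + 2) ^ (i + 2) * (i + 2 - k + 1) :=
    (Nat.pow_le_pow_right (by omega) hkm).trans (Nat.le_mul_of_pos_right _ (by omega))
  have : reps (blockStart i) i * (i + 2) ^ k ≤
      (i + 2) ^ (i + 2) * reps (blockStart i) i * (i + 2 - k + 1) := by
    calc _ ≤ reps (blockStart i) i * ((i + 2) ^ (i + 2) * (i + 2 - k + 1)) :=
          Nat.mul_le_mul_left _ hpow
      _ = _ := by ring
  exact_mod_cast this

lemma reps_le_sum_range_weight {j k n : ℕ} (hkm : k ≤ j + 2) (hn : blockStart (j + 1) ≤ n) :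
    (reps (blockStart j) j : ℝ) ≤ ∑ t ∈ range n, weight k t := by
  calc (reps (blockStart j) j : ℝ)
      ≤ ∑ t ∈ range (blockStart j), weight k t +
          ∑ o ∈ range (blockLen j), weight k (blockStart j + o) :=
        le_add_of_nonneg_of_le (sum_nonneg fun t _ => weight_nonneg k t)
          (reps_le_sum_block_weight hkm)
    _ = ∑ t ∈ range (blockStart (j + 1)), weight k t := (sum_range_add _ _ _).symm
    _ ≤ ∑ t ∈ range n, weight k t :=
        sum_le_sum_of_subset_of_nonneg (range_mono hn) fun t _ _ => weight_nonneg k t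

lemma tendsto_blockIdx_atTop : Tendsto blockIdx atTop atTop :=
  tendsto_atTop_atTop.2 fun i => ⟨blockStart i, fun _ => le_blockIdx⟩

lemma abs_div_sub_one_le_of_blockIdx {i0 k n : ℕ} {b : ℕ → ℕ} (hk : 0 < k) (hkm : k ≤ i0 + 2)
    (hb : ∀ s < k, b s < i0 + 2) (hn : i0 < blockIdx n) :
    |(∑ t ∈ range n, matchIndicator k b t) / (∑ t ∈ range n, weight k t) - 1|
      ≤ 1 / blockIdx n := by
  obtain ⟨j, hj⟩ : ∃ j, blockIdx n = j + 1 := ⟨blockIdx n - 1, by omega⟩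
  have hstart := blockStart_blockIdx_le n
  have hend := lt_blockStart_blockIdx_succ n
  rw [hj] at hstart hend ⊢
  have herr := abs_sum_range_blockStart_add_le hk hkm hb (i := j + 1) (by omega)
    (T := n - blockStart (j + 1)) (by rw [blockStart_succ] at hend; omega)
  rw [Nat.add_sub_cancel' hstart, sum_sub_distrib] at herr
  have hi0 : (blockStart i0 : ℝ) ≤ blockStart j := by
    exact_mod_cast blockStart_strictMono.monotone (by omega)
  refine abs_div_sub_one_le herr ((reps_le_sum_range_weight (by omega) hstart).trans' ?_)
    (by positivity) j.succ_pos
  simp only [reps]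
  push_cast
  nlinarith [mul_le_mul_of_nonneg_left hi0 (by positivity : (0 : ℝ) ≤ j + 1)]

theorem qNormal : QNormal seqQ seqE := by
  intro k hk B hB
  have hb : ∀ s < k, B.getD s 0 < B.sum + k + 2 := fun s hs => by
    have : B.getD s 0 ≤ B.sum := by
      rw [List.getD_eq_getElem _ _ (hB ▸ hs)]
      exact List.le_sum_of_mem (List.getElem_mem _)
    omega
  have hNQ : ∀ n, (NQG seqE B n : ℝ) / QNkG seqQ k n =
      (∑ t ∈ range n, matchIndicator k (B.getD · 0) t) / ∑ t ∈ range n, weight k t := fun n => by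
    simp [NQG_eq_sum_range, QNkG_eq_sum_range, hB, matchIndicator, weight, seqE, seqQ]
  simp only [hNQ]
  rw [tendsto_iff_norm_sub_tendsto_zero]
  refine squeeze_zero' (.of_forall fun n => norm_nonneg _) ?_
    (tendsto_one_div_atTop_nhds_zero_nat.comp tendsto_blockIdx_atTop)
  filter_upwards [tendsto_blockIdx_atTop.eventually_gt_atTop (B.sum + k)] with n hn
  exact abs_div_sub_one_le_of_blockIdx hk (by omega) hb hn

-- the digit at the 1-indexed position `t + 1` sits in a digit slot
def IsDigitPos (t : ℕ) : Prop :=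
  (t - blockStart (blockIdx t)) % (4 * (blockIdx t + 2)) < blockIdx t + 2

instance : DecidablePred IsDigitPos := fun _ => Nat.decLt _ _

lemma four_mul_count_isDigitPos (i : ℕ) :
    4 * Nat.count IsDigitPos (blockStart i) = blockStart i := by
  induction i with
  | zero => simp [blockStart]
  | succ i ih =>
    have hblock : Nat.count (fun o => IsDigitPos (blockStart i + o)) (blockLen i) =
        (i + 2) ^ (i + 2) * reps (blockStart i) i * (i + 2) := by
      rw [Nat.count_eq_card_filter_range, filter_congr fun o ho => by
        rw [IsDigitPos, blockIdx_blockStart_add (mem_range.1 ho), Nat.add_sub_cancel_left],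
        blockLen_eq, card_filter_range_mul_mod_lt (by omega)]
    rw [blockStart_succ, Nat.count_add, mul_add, ih, hblock, blockLen, period]
    ring

lemma cantorTail_lt_half {t : ℕ} (ht : ¬IsDigitPos t) : cantorTail seqQ seqE t < 1 / 2 := by
  have hq : seqQ (t + 1) = markerBase (blockIdx t) := by
    simp only [seqQ, Nat.add_sub_cancel, qAt, unitBase]
    exact if_neg ht
  have he : seqE (t + 1) = blockIdx t + 2 := by
    simp only [seqE, Nat.add_sub_cancel, eAt, unitDigit]
    exact if_neg ht
  have hM : 2 * (blockIdx t + 3) < markerBase (blockIdx t) := by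
    have := unitLen_le_blockLen (blockIdx t); unfold markerBase; omega
  have hM' : (2 * (blockIdx t + 3) : ℝ) < markerBase (blockIdx t) := by exact_mod_cast hM
  have := cantorTail_le_one (fun n _ => two_le_seqQ n) (fun n _ => seqE_lt_seqQ n) (t + 1)
  rw [cantorTail_eq (fun n _ => two_le_seqQ n) (fun n _ => seqE_lt_seqQ n), hq, he,
    div_lt_iff₀ (by linarith)]
  push_cast
  linarith

lemma fract_TQ_lt_half {n : ℕ} (hn : ¬IsDigitPos n) :
    Int.fract (TQ seqQ (cantorVal seqQ seqE) n) < 1 / 2 := by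
  rw [TQ_cantorVal (fun n _ => two_le_seqQ n) (fun n _ => seqE_lt_seqQ n) exists_seqE_ne,
    Int.fract_eq_self.2 ⟨cantorTail_nonneg n, by linarith [cantorTail_lt_half hn]⟩]
  exact cantorTail_lt_half hn

theorem not_uDMod1_TQ : ¬UDMod1 (TQ seqQ (cantorVal seqQ seqE)) := by
  set u := TQ seqQ (cantorVal seqQ seqE)
  intro h
  have hfreq : ∀ i, (#{n ∈ range (blockStart i) | 1 / 2 ≤ Int.fract (u n) ∧ Int.fract (u n) < 1}
      : ℝ) / blockStart i ≤ 1 / 4 := fun i => by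
    have hsub : {n ∈ range (blockStart i) | 1 / 2 ≤ Int.fract (u n) ∧ Int.fract (u n) < 1} ⊆
        {n ∈ range (blockStart i) | IsDigitPos n} :=
      monotone_filter_right _ fun n _ hn => not_not.1 fun ht => (fract_TQ_lt_half ht).not_ge hn.1
    have hcount : (4 * #{n ∈ range (blockStart i) | IsDigitPos n} : ℝ) = blockStart i := by
      exact_mod_cast Nat.count_eq_card_filter_range IsDigitPos _ ▸ four_mul_count_isDigitPos i
    have := (Nat.cast_le (α := ℝ)).2 (card_le_card hsub)
    exact div_le_of_le_mul₀ (by positivity) (by norm_num) (by linarith)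
  have := le_of_tendsto' ((h (1 / 2) 1 (by norm_num) (by norm_num) le_rfl).comp
    blockStart_strictMono.tendsto_atTop) hfreq
  norm_num at this

end QNormalCounterexample

/-- There exist a basic sequence `Q` and a real number `x ∈ [0,1)`, with `Q`-Cantor series
digits `E`, such that `x` is `Q`-normal but not `Q`-distribution normal. -/
theorem stmt9 : ∃ (q E : ℕ → ℕ) (x : ℝ),
    (∀ n, 1 ≤ n → 2 ≤ q n) ∧
    (∀ n, 1 ≤ n → E n < q n) ∧
    (∀ N, ∃ n, N ≤ n ∧ E n ≠ q n - 1) ∧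
    x ∈ Set.Ico (0 : ℝ) 1 ∧
    x = cantorVal q E ∧
    QNormal q E ∧
    ¬ UDMod1 (TQ q x) := by
  open QNormalCounterexample in
  exact ⟨seqQ, seqE, cantorVal seqQ seqE, fun n _ => two_le_seqQ n, fun n _ => seqE_lt_seqQ n,
    exists_seqE_ne, cantorVal_mem_Ico (fun n _ => two_le_seqQ n) (fun n _ => seqE_lt_seqQ n)
      exists_seqE_ne, rfl, qNormal, not_uDMod1_TQ⟩
end

section
/- Fix an index i ≥ 1, positive reals ε'_1, ..., ε'_{i+1} that are non-increasing, non-negative integers l_1,...,l_i and positive integers |x_1| ≤ ... ≤ |x_{i+1}|, and define f_i(w,z) = (l_1|x_1|ε'_1 + ... + l_i|x_i|ε'_i + (|x_{i+1}|ε'_{i+1})w + z)/(l_1|x_1| + ... + l_i|x_i| + |x_{i+1}|w + z). Suppose l_i > 0, |x_i| > 0, ε'_{i+1} < 1, l_1|x_1| + ... + l_{i−1}|x_{i−1}| > l_1|x_1|ε'_1 + ... + l_{i−1}|x_{i−1}|ε'_{i−1}, and |x_{i+1}|/(l_i|x_i|) < (1 − ε'_i)/ε'_{i+1}. Then for every pair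 of integers (w,z) with 0 ≤ w ≤ l_{i+1} and 0 ≤ z ≤ |x_{i+1}| − 1, one has f_i(w,z) < f_i(0,|x_{i+1}|) = (l_1|x_1|ε'_1 + ... + l_i|x_i|ε'_i + |x_{i+1}|)/(l_1|x_1| + ... + l_i|x_i| + |x_{i+1}|). -/
/-- Monotonicity of the auxiliary rational function `f_i` used in bounding star
discrepancies: under the stated hypotheses, `f_i(w,z) < f_i(0,|x_{i+1}|)` for all integer
pairs `(w,z)` with `0 ≤ w ≤ l_{i+1}` and `0 ≤ z ≤ |x_{i+1}| - 1`, together with the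
evaluation of `f_i(0,|x_{i+1}|)`. Here `len j` plays the role of `|x_j|` and `ε j` of `ε'_j`. -/
theorem stmt13 (i : ℕ) (hi : 1 ≤ i) (l : ℕ → ℕ) (len : ℕ → ℕ) (ε : ℕ → ℝ)
    (hεpos : ∀ j, 1 ≤ j → j ≤ i + 1 → 0 < ε j)
    (hεmono : ∀ j, 1 ≤ j → j ≤ i → ε (j + 1) ≤ ε j)
    (hlenpos : ∀ j, 1 ≤ j → j ≤ i + 1 → 0 < len j)
    (hlenmono : ∀ j, 1 ≤ j → j ≤ i → len j ≤ len (j + 1))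
    (hli : 0 < l i) (hεi1 : ε (i + 1) < 1)
    (hsum : ∑ j ∈ Finset.Icc 1 (i - 1), (l j * len j : ℝ) * ε j <
      ∑ j ∈ Finset.Icc 1 (i - 1), (l j * len j : ℝ))
    (hratio : (len (i + 1) : ℝ) / ((l i : ℝ) * (len i : ℝ)) < (1 - ε i) / ε (i + 1))
    (f : ℝ → ℝ → ℝ)
    (hf : ∀ W Z : ℝ, f W Z =
      (∑ j ∈ Finset.Icc 1 i, (l j * len j : ℝ) * ε j + (len (i + 1) : ℝ) * ε (i + 1) * W + Z) /
      (∑ j ∈ Finset.Icc 1 i, (l j * len j : ℝ) + (len (i + 1) : ℝ) * W + Z)) :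
    (∀ w z : ℕ, w ≤ l (i + 1) → z ≤ len (i + 1) - 1 →
      f (w : ℝ) (z : ℝ) < f 0 (len (i + 1) : ℝ)) ∧
    f 0 (len (i + 1) : ℝ) =
      (∑ j ∈ Finset.Icc 1 i, (l j * len j : ℝ) * ε j + (len (i + 1) : ℝ)) /
      (∑ j ∈ Finset.Icc 1 i, (l j * len j : ℝ) + (len (i + 1) : ℝ)) := by
  obtain ⟨n, rfl⟩ : ∃ n, i = n + 1 := ⟨i - 1, by omega⟩
  simp only [show n + 1 + 1 = n + 2 from rfl] at *
  set A : ℝ := ∑ j ∈ Finset.Icc 1 (n + 1), (l j * len j : ℝ) * ε j with hA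
  set B : ℝ := ∑ j ∈ Finset.Icc 1 (n + 1), (l j * len j : ℝ) with hB
  set c : ℝ := (len (n + 2) : ℝ) with hc
  set e : ℝ := ε (n + 2) with he
  -- basic positivity facts
  have hεpos' : 0 < e := hεpos (n + 2) (by omega) (by omega)
  have hεi : e ≤ ε (n + 1) := hεmono (n + 1) (by omega) (by omega)
  have hcpos : 0 < c := by
    have h := hlenpos (n + 2) (by omega) (by omega)
    rw [hc]; exact_mod_cast h
  have hllpos : 0 < (l (n + 1) : ℝ) * (len (n + 1) : ℝ) := by
    have h1 := hli
    have h2 := hlenpos (n + 1) (by omega) (by omega)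
    positivity
  -- ε (n+1) < 1
  have hεilt1 : ε (n + 1) < 1 := by
    have hd : 0 < (1 - ε (n + 1)) / e :=
      lt_trans (div_pos hcpos hllpos) hratio
    have h2 := mul_pos hd hεpos'
    rw [div_mul_cancel₀ _ (ne_of_gt hεpos')] at h2
    linarith
  -- chain: ε (n+2) ≤ ε j for all j in range
  have hchain : ∀ k, ∀ j, 1 ≤ j → j ≤ k → k ≤ n + 2 → ε k ≤ ε j := by
    intro k
    induction k with
    | zero => intro j h1 h2 _; omega
    | succ m ih =>
      intro j h1 h2 h3
      rcases Nat.lt_or_ge j (m + 1) with h | h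
      · have hm1 : 1 ≤ m := by omega
        have := hεmono m hm1 (by omega)
        exact le_trans this (ih j h1 (by omega) (by omega))
      · have : j = m + 1 := by omega
        rw [this]
  -- splitting sums
  have hsplit : ∀ g : ℕ → ℝ, ∑ j ∈ Finset.Icc 1 (n + 1), g j
      = ∑ j ∈ Finset.Icc 1 n, g j + g (n + 1) :=
    fun g => Finset.sum_Icc_succ_top (by omega) g
  have hsum' : ∑ j ∈ Finset.Icc 1 n, (l j * len j : ℝ) * ε j <
      ∑ j ∈ Finset.Icc 1 n, (l j * len j : ℝ) := hsum
  have hBA : A < B := by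
    rw [hA, hB, hsplit, hsplit]
    have hterm : (l (n + 1) * len (n + 1) : ℝ) * ε (n + 1)
        < (l (n + 1) * len (n + 1) : ℝ) := by
      nlinarith [hllpos]
    push_cast at hterm ⊢
    push_cast at hsum'
    linarith
  have hAnonneg : 0 ≤ A := by
    apply Finset.sum_nonneg
    intro j hj
    simp only [Finset.mem_Icc] at hj
    have := hεpos j hj.1 (by omega)
    positivity
  have hBpos : 0 < B := lt_of_le_of_lt hAnonneg hBA
  have heBA : e * B ≤ A := by
    rw [hA, hB, Finset.mul_sum]
    apply Finset.sum_le_sum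
    intro j hj
    simp only [Finset.mem_Icc] at hj
    have h1 : e ≤ ε j := hchain (n + 2) j hj.1 (by omega) (le_refl _)
    have h2 : (0 : ℝ) ≤ (l j * len j : ℝ) := by positivity
    nlinarith
  constructor
  · intro w z hw hz
    rw [hf, hf]
    have hwn : (0 : ℝ) ≤ (w : ℝ) := Nat.cast_nonneg _
    have hzn : (0 : ℝ) ≤ (z : ℝ) := Nat.cast_nonneg _
    have hzc : (z : ℝ) + 1 ≤ c := by
      have hlp := hlenpos (n + 2) (by omega) (by omega)
      have h1 : z + 1 ≤ len (n + 2) := by omega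
      have h2 : (z : ℝ) + 1 ≤ (len (n + 2) : ℝ) := by exact_mod_cast h1
      rw [hc]; exact h2
    have hd1 : 0 < B + c * (w : ℝ) + (z : ℝ) := by
      have : 0 ≤ c * (w : ℝ) := by positivity
      linarith
    have hd2 : 0 < B + c * 0 + c := by linarith
    rw [div_lt_div_iff₀ hd1 hd2]
    have key1 : 0 < (c - (z : ℝ)) * (B - A) :=
      mul_pos (by linarith) (by linarith)
    have key2 : 0 ≤ c * (w : ℝ) * (A - e * B + c * (1 - e)) := by
      have h2 : 0 ≤ c * (1 - e) := by nlinarith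
      have h3 : 0 ≤ c * (w : ℝ) := by positivity
      exact mul_nonneg h3 (by linarith)
    clear_value A B c e
    have hid : (A + c * e * (w : ℝ) + (z : ℝ)) * (B + c * 0 + c)
        = (A + c * e * 0 + c) * (B + c * (w : ℝ) + (z : ℝ))
          - ((c - (z : ℝ)) * (B - A) + c * (w : ℝ) * (A - e * B + c * (1 - e))) := by
      ring
    rw [hid]
    linarith [key1, key2]
  · rw [hf]
    ring_nf
end
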